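/- arXiv:1403.5962 — 8 statements merged into one kernel-verified Lean document; each statement's English description precedes it below -/
import Mathlib

section
/- The hyposylvester relation, defined on words over a totally ordered alphabet A by (1) u a c v ∼ u c a v whenever a < c and some letter b with a < b < c occurs in u a c v, and (2) u a b v a w ∼ u b a v a w whenever a < b (with the same occurrence of a later in the word), generates a congruence on the free monoid A*: if w ∼ w' then s w t ≡ s w' t for all words s, t. -/
/-- One elementary hyposylvester rewriting: either exchange adjacent letters `a c`
(`a < c`) when some letter `b` with `a < b < c` occurs in the word, or exchange
adjacent letters `a b` (`a < b`) when another occurrence of `a` appears later. -/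
def HypoStep {α : Type*} [LinearOrder α] (w w' : List α) : Prop :=
  (∃ (u v : List α) (a c : α), a < c ∧
      (∃ b ∈ u ++ [a, c] ++ v, a < b ∧ b < c) ∧
      w = u ++ [a, c] ++ v ∧ w' = u ++ [c, a] ++ v) ∨
  (∃ (u v x : List α) (a b : α), a < b ∧
      w = u ++ [a, b] ++ v ++ [a] ++ x ∧ w' = u ++ [b, a] ++ v ++ [a] ++ x)

/-- The hyposylvester relation generates a congruence on the free
monoid `A*`: if `w ∼ w'` is an elementary hyposylvester rewriting, then
`s w t ≡ s w' t` for the generated equivalence, for all words `s, t`. -/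
theorem hyposylvester_congruence {α : Type*} [LinearOrder α]
    (w w' : List α) (h : HypoStep w w') (s t : List α) :
    Relation.EqvGen HypoStep (s ++ w ++ t) (s ++ w' ++ t) := by
  apply Relation.EqvGen.rel
  rcases h with ⟨u, v, a, c, hac, ⟨b, hb, hab, hbc⟩, hw, hw'⟩ |
    ⟨u, v, x, a, b, hab, hw, hw'⟩
  · left
    refine ⟨s ++ u, v ++ t, a, c, hac, ⟨b, ?_, hab, hbc⟩, ?_, ?_⟩
    · simp only [List.mem_append] at hb ⊢; tauto
    · subst hw; simp
    · subst hw'; simp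
  · right
    exact ⟨s ++ u, v, x ++ t, a, b, hab, by subst hw; simp, by subst hw'; simp⟩
end

section
/- The number of hyposylvester classes of words of packed evaluation (i_1, i_2, ..., i_r) equals (i_2+1)(i_3+1)···(i_r+1). -/
open List Relation Function

theorem exists_eq_append_cons_not_mem {α : Type*} {a : α} {w : List α} (h : a ∈ w) :
    ∃ w₁ w₂, w = w₁ ++ a :: w₂ ∧ a ∉ w₂ := by
  induction w using reverseRecOn with
  | nil => simp at h
  | append_singleton w x ih =>
    by_cases hx : x = a
    · exact ⟨w, [], by simp [hx], by simp⟩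
    · obtain ⟨w₁, w₂, rfl, ha⟩ := ih (by simpa [Ne.symm hx] using h)
      exact ⟨w₁, w₂ ++ [x], by simp, by simp [ha, Ne.symm hx]⟩

theorem count_filter_ne_self {α : Type*} [DecidableEq α] (c : α) (w : List α) :
    (w.filter (· ≠ c)).count c = 0 :=
  count_eq_zero.mpr fun h => by simpa using (mem_filter.mp h).2

section LinearOrder

variable {α : Type*} [LinearOrder α] {w w' : List α}

namespace HypoStep

theorem perm (h : HypoStep w w') : w ~ w' := by
  rcases h with ⟨u, v, a, c, -, -, rfl, rfl⟩ | ⟨u, v, x, a, b, -, rfl, rfl⟩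
  · simpa using ((Perm.swap c a v).append_left u)
  · simpa using ((Perm.swap b a _).append_left u)

theorem append (h : HypoStep w w') (p q : List α) : HypoStep (p ++ w ++ q) (p ++ w' ++ q) := by
  rcases h with ⟨u, v, a, c, hac, ⟨b, hb, hab, hbc⟩, rfl, rfl⟩ | ⟨u, v, x, a, b, hab, rfl, rfl⟩
  · refine .inl ⟨p ++ u, v ++ q, a, c, hac, ⟨b, ?_, hab, hbc⟩, by simp, by simp⟩
    simp only [mem_append] at hb ⊢
    tauto
  · exact .inr ⟨p ++ u, v, x ++ q, a, b, hab, by simp, by simp⟩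

theorem map {β : Type*} [LinearOrder β] {f : α → β} {s : Set α} (hf : StrictMonoOn f s)
    (hw : ∀ x ∈ w, x ∈ s) (h : HypoStep w w') : HypoStep (w.map f) (w'.map f) := by
  rcases h with ⟨u, v, a, c, hac, ⟨b, hb, hab, hbc⟩, rfl, rfl⟩ | ⟨u, v, x, a, b, hab, rfl, rfl⟩
  · have ha := hw a (by simp)
    have hc := hw c (by simp)
    refine .inl ⟨u.map f, v.map f, f a, f c, hf ha hc hac,
      ⟨f b, by simpa using mem_map_of_mem hb, hf ha (hw b hb) hab, hf (hw b hb) hc hbc⟩,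
      by simp, by simp⟩
  · exact .inr ⟨u.map f, v.map f, x.map f, f a, f b, hf (hw a (by simp)) (hw b (by simp)) hab,
      by simp, by simp⟩

end HypoStep

theorem perm_of_eqvGen_hypoStep (h : EqvGen HypoStep w w') : w ~ w' :=
  (Perm.eqv α).eqvGen_iff.mp (EqvGen.mono (fun _ _ => HypoStep.perm) _ _ h)

theorem eqvGen_hypoStep_append (h : EqvGen HypoStep w w') (p q : List α) :
    EqvGen HypoStep (p ++ w ++ q) (p ++ w' ++ q) := by
  induction h with
  | rel _ _ h => exact .rel _ _ (h.append p q)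
  | refl => exact .refl _
  | symm _ _ _ ih => exact ih.symm
  | trans _ _ _ _ _ ih ih' => exact ih.trans _ _ _ ih'

theorem eqvGen_hypoStep_map {β : Type*} [LinearOrder β] {f : α → β} {s : Set α}
    (hf : StrictMonoOn f s) (hw : ∀ x ∈ w, x ∈ s) (h : EqvGen HypoStep w w') :
    EqvGen HypoStep (w.map f) (w'.map f) := by
  induction h with
  | rel _ _ h => exact .rel _ _ (h.map hf hw)
  | refl => exact .refl _
  | symm _ _ h ih => exact (ih fun x hx => hw x ((perm_of_eqvGen_hypoStep h).mem_iff.mp hx)).symm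
  | trans _ _ _ h _ ih ih' =>
    exact (ih hw).trans _ _ _ (ih' fun x hx => hw x ((perm_of_eqvGen_hypoStep h).mem_iff.mpr hx))

end LinearOrder

section CountAfterLast

variable {α : Type*} [DecidableEq α] {a b : α} {w w₁ w₂ : List α}

def afterLastStep (a b : α) (n : ℕ) (x : α) : ℕ :=
  if x = a then 0 else if x = b then n + 1 else n

/-- The number of occurrences of `b` after the last occurrence of `a` in `w` (all of them if
`a ∉ w`). -/
def countAfterLast (a b : α) (w : List α) : ℕ :=
  w.foldl (afterLastStep a b) 0

theorem foldl_afterLastStep_of_not_mem (ha : a ∉ w) (n : ℕ) :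
    w.foldl (afterLastStep a b) n = n + w.count b := by
  induction w generalizing n with
  | nil => simp
  | cons x w ih =>
    simp only [mem_cons, not_or] at ha
    rw [foldl_cons, ih ha.2, count_cons, afterLastStep, if_neg (Ne.symm ha.1)]
    by_cases hx : x = b <;> simp [hx]
    omega

theorem foldl_afterLastStep_of_mem (ha : a ∈ w) (n n' : ℕ) :
    w.foldl (afterLastStep a b) n = w.foldl (afterLastStep a b) n' := by
  obtain ⟨s, t, rfl⟩ := append_of_mem ha
  simp [afterLastStep]

theorem countAfterLast_append_of_not_mem (ha : a ∉ w₂) :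
    countAfterLast a b (w₁ ++ w₂) = countAfterLast a b w₁ + w₂.count b := by
  rw [countAfterLast, foldl_append, foldl_afterLastStep_of_not_mem ha, countAfterLast]

theorem countAfterLast_append_of_mem (ha : a ∈ w₂) :
    countAfterLast a b (w₁ ++ w₂) = countAfterLast a b w₂ := by
  rw [countAfterLast, foldl_append, foldl_afterLastStep_of_mem ha, countAfterLast]

theorem countAfterLast_of_not_mem (ha : a ∉ w) : countAfterLast a b w = w.count b := by
  simpa [countAfterLast] using countAfterLast_append_of_not_mem (w₁ := []) (b := b) ha

theorem countAfterLast_append_cons (ha : a ∉ w₂) :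
    countAfterLast a b (w₁ ++ a :: w₂) = w₂.count b := by
  rw [← singleton_append, ← append_assoc, countAfterLast_append_of_not_mem ha,
    countAfterLast_append_of_mem (by simp)]
  simp [countAfterLast, afterLastStep]

theorem countAfterLast_le_count : countAfterLast a b w ≤ w.count b := by
  by_cases ha : a ∈ w
  · obtain ⟨w₁, w₂, rfl, hlast⟩ := exists_eq_append_cons_not_mem ha
    rw [countAfterLast_append_cons hlast, count_append, count_cons]
    omega
  · exact (countAfterLast_of_not_mem ha).le

theorem countAfterLast_filter_ne {c : α} (hca : c ≠ a) (hcb : c ≠ b) :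
    countAfterLast a b (w.filter (· ≠ c)) = countAfterLast a b w := by
  by_cases ha : a ∈ w
  · obtain ⟨w₁, w₂, rfl, hlast⟩ := exists_eq_append_cons_not_mem ha
    have hb : (w₂.filter (· ≠ c)).count b = w₂.count b := count_filter (by simpa using hcb.symm)
    rw [filter_append, filter_cons_of_pos (by simpa using hca.symm),
      countAfterLast_append_cons hlast,
      countAfterLast_append_cons fun h => hlast (mem_of_mem_filter h), hb]
  · rw [countAfterLast_of_not_mem ha, countAfterLast_of_not_mem fun h => ha (mem_of_mem_filter h),
      count_filter (by simpa using hcb.symm)]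

theorem afterLastStep_comm {x y : α} (h : ¬(x = a ∧ y = b)) (h' : ¬(y = a ∧ x = b)) (n : ℕ) :
    afterLastStep a b (afterLastStep a b n x) y = afterLastStep a b (afterLastStep a b n y) x := by
  simp only [afterLastStep]
  split_ifs <;> simp_all

end CountAfterLast

theorem HypoStep.countAfterLast_eq {α : Type*} [LinearOrder α] {a b : α} {w w' : List α}
    (hab : a ⋖ b) (h : HypoStep w w') : countAfterLast a b w = countAfterLast a b w' := by
  rcases h with ⟨u, v, x, y, hxy, ⟨z, -, hxz, hzy⟩, rfl, rfl⟩ | ⟨u, v, t, x, y, hxy, rfl, rfl⟩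
  · have h₁ : ¬(x = a ∧ y = b) := by
      rintro ⟨rfl, rfl⟩
      exact hab.2 hxz hzy
    have h₂ : ¬(y = a ∧ x = b) := by
      rintro ⟨rfl, rfl⟩
      exact hab.1.not_gt hxy
    simp only [countAfterLast, foldl_append, foldl_cons, foldl_nil, afterLastStep_comm h₁ h₂]
  · by_cases h₁ : x = a ∧ y = b
    · simp [countAfterLast, afterLastStep, h₁.1]
    · have h₂ : ¬(y = a ∧ x = b) := by
        rintro ⟨rfl, rfl⟩
        exact hab.1.not_gt hxy
      simp only [countAfterLast, foldl_append, foldl_cons, foldl_nil, afterLastStep_comm h₁ h₂]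

theorem countAfterLast_eq_of_eqvGen_hypoStep {α : Type*} [LinearOrder α] {a b : α}
    {w w' : List α} (hab : a ⋖ b) (h : EqvGen HypoStep w w') :
    countAfterLast a b w = countAfterLast a b w' :=
  (InvImage.equivalence _ _ (Equivalence.mk (fun _ => rfl) Eq.symm Eq.trans)).eqvGen_iff.mp
    (EqvGen.mono (fun _ _ => HypoStep.countAfterLast_eq hab) _ _ h)

section Sorting

variable {α : Type*} [LinearOrder α] {W p q : List α} {c x : α}

/-- The side conditions of both rules depend only on the content of the word and on what follows
the exchanged pair, so they can be checked once for all rearrangements of `W` ending with `q`. -/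
def LettersCommute (W q : List α) (c x : α) : Prop :=
  ∀ s t, s ++ c :: x :: t ++ q ~ W → EqvGen HypoStep (s ++ c :: x :: t ++ q) (s ++ x :: c :: t ++ q)

theorem LettersCommute.append_left (h : LettersCommute W q c x) (t' : List α) :
    LettersCommute W (t' ++ q) c x := fun s t hst => by
  simpa using h s (t ++ t') (by simpa using hst)

theorem lettersCommute_of_lt_of_lt {b : α} (hxb : x < b) (hbc : b < c) (hb : b ∈ W) :
    LettersCommute W q c x := fun s t hst => by
  have hb' : b ∈ s ++ [x, c] ++ (t ++ q) := by
    have := hst.symm.subset hb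
    simp only [mem_append, mem_cons] at this ⊢
    tauto
  exact .symm _ _ (.rel _ _ (.inl ⟨s, t ++ q, x, c, hxb.trans hbc, ⟨b, hb', hxb, hbc⟩,
    by simp, by simp⟩))

theorem lettersCommute_of_mem (hxc : x < c) (hx : x ∈ q) : LettersCommute W q c x := by
  intro s t _
  obtain ⟨q₁, q₂, rfl⟩ := append_of_mem hx
  exact .symm _ _ (.rel _ _ (.inr ⟨s, t ++ q₁, q₂, x, c, hxc, by simp, by simp⟩))

theorem eqvGen_hypoStep_replicate_cons (k : ℕ) (hcx : LettersCommute W q c x)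
    (hW : p ++ replicate k c ++ x :: q ~ W) :
    EqvGen HypoStep (p ++ replicate k c ++ x :: q) (p ++ x :: replicate k c ++ q) := by
  induction k generalizing q with
  | zero => simpa using EqvGen.refl _
  | succ k ih =>
    have h₁ : EqvGen HypoStep (p ++ replicate (k + 1) c ++ x :: q)
        (p ++ replicate k c ++ x :: (c :: q)) := by
      simpa [replicate_succ'] using
        hcx (p ++ replicate k c) [] (by simpa [replicate_succ'] using hW)
    have h₂ := ih (hcx.append_left [c]) ((perm_of_eqvGen_hypoStep h₁).symm.trans hW)
    exact h₁.trans _ _ _ (by simpa [replicate_succ'] using h₂)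

theorem eqvGen_hypoStep_filter_replicate (v : List α)
    (hcx : ∀ x ∈ v, x ≠ c → LettersCommute W q c x)
    (hW : p ++ v ++ q ~ W) :
    EqvGen HypoStep (p ++ v ++ q) (p ++ v.filter (· ≠ c) ++ replicate (v.count c) c ++ q) := by
  induction v using reverseRecOn generalizing q with
  | nil => simpa using EqvGen.refl _
  | append_singleton v x ih =>
    have h₁ := ih (q := x :: q) (fun y hy hyc => (hcx y (by simp [hy]) hyc).append_left [x])
      (by simpa using hW)
    by_cases hx : x = c
    · subst hx
      simpa [replicate_succ'] using h₁
    · have h₂ := eqvGen_hypoStep_replicate_cons (p := p ++ v.filter (· ≠ c)) _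
        (hcx x (by simp) hx) ((perm_of_eqvGen_hypoStep h₁).symm.trans (by simpa using hW))
      simpa [hx] using h₁.trans _ _ _ h₂

theorem eqvGen_hypoStep_replicate_filter (u : List α)
    (hcx : ∀ x ∈ u, x ≠ c → LettersCommute W q c x)
    (hW : p ++ u ++ q ~ W) :
    EqvGen HypoStep (p ++ u ++ q) (p ++ replicate (u.count c) c ++ u.filter (· ≠ c) ++ q) := by
  have h₁ := eqvGen_hypoStep_filter_replicate u hcx hW
  have hperm : p ++ (replicate (u.count c) c ++ u.filter (· ≠ c)) ++ q ~ W := by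
    have := (perm_of_eqvGen_hypoStep h₁).symm.trans hW
    simp only [append_assoc] at this ⊢
    exact ((perm_append_comm_assoc _ _ _).append_left p).trans this
  have h₂ := eqvGen_hypoStep_filter_replicate _ (fun x hx hxc => hcx x (by simp_all) hxc) hperm
  simp only [count_append, count_replicate_self, count_filter_ne_self, add_zero] at h₂
  exact h₁.trans _ _ _ (by simpa using h₂.symm)

end Sorting

theorem eqvGen_hypoStep_replicate_filter_replicate {m : ℕ} {w : List ℕ}
    (hle : ∀ x ∈ w, x ≤ m + 1) (hmem : ∀ k ≤ m, k ∈ w) :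
    EqvGen HypoStep w (replicate (w.count (m + 1) - countAfterLast m (m + 1) w) (m + 1) ++
      w.filter (· ≠ m + 1) ++ replicate (countAfterLast m (m + 1) w) (m + 1)) := by
  obtain ⟨w₁, w₂, rfl, hm⟩ := exists_eq_append_cons_not_mem (hmem m le_rfl)
  have hcomm : ∀ q, ∀ x < m, LettersCommute (w₁ ++ m :: w₂) q (m + 1) x := fun q x hx =>
    lettersCommute_of_lt_of_lt (Nat.lt_succ_self x) (by omega) (hmem _ (by omega))
  have hright : EqvGen HypoStep (w₁ ++ [m] ++ w₂ ++ [])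
      (w₁ ++ [m] ++ w₂.filter (· ≠ m + 1) ++ replicate (w₂.count (m + 1)) (m + 1) ++ []) := by
    refine eqvGen_hypoStep_filter_replicate w₂ (fun x hx hxc => hcomm [] x ?_) (by simp)
    have := hle x (by simp [hx])
    have : x ≠ m := fun h => hm (h ▸ hx)
    omega
  have hleft : EqvGen HypoStep
      ([] ++ w₁ ++ m :: (w₂.filter (· ≠ m + 1) ++ replicate (w₂.count (m + 1)) (m + 1)))
      ([] ++ replicate (w₁.count (m + 1)) (m + 1) ++ w₁.filter (· ≠ m + 1) ++
        m :: (w₂.filter (· ≠ m + 1) ++ replicate (w₂.count (m + 1)) (m + 1))) := by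
    refine eqvGen_hypoStep_replicate_filter w₁ (fun x hx hxc => ?_)
      (by simpa using (perm_of_eqvGen_hypoStep hright).symm)
    have := hle x (by simp [hx])
    rcases (show x < m ∨ x = m by omega) with hx | rfl
    · exact hcomm _ x hx
    · exact lettersCommute_of_mem (Nat.lt_succ_self x) (by simp)
  rw [countAfterLast_append_cons hm, count_append, count_cons_of_ne (by omega),
    Nat.add_sub_cancel, filter_append, filter_cons_of_pos (by simp)]
  simpa using hright.trans _ _ _ (by simpa using hleft)

theorem eqvGen_hypoStep_of_perm_of_countAfterLast_eq :
    ∀ (m : ℕ) {w w' : List ℕ}, (∀ x ∈ w, x ≤ m) → (∀ k < m, k ∈ w) → w ~ w' →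
      (∀ k < m, countAfterLast k (k + 1) w = countAfterLast k (k + 1) w') → EqvGen HypoStep w w'
  | 0, w, w', hle, _, hperm, _ => by
    have hw : w = replicate w.length 0 := eq_replicate_of_mem fun x hx => Nat.le_zero.mp (hle x hx)
    rw [hw] at hperm ⊢
    rw [perm_replicate.mp hperm.symm]
    exact .refl _
  | m + 1, w, w', hle, hmem, hperm, hstat => by
    have hle' : ∀ x ∈ w', x ≤ m + 1 := fun x hx => hle x (hperm.mem_iff.mpr hx)
    have hmem' : ∀ k ≤ m, k ∈ w' := fun k hk => hperm.mem_iff.mp (hmem k (by omega))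
    have hmid : EqvGen HypoStep (w.filter (· ≠ m + 1)) (w'.filter (· ≠ m + 1)) := by
      refine eqvGen_hypoStep_of_perm_of_countAfterLast_eq m (fun x hx => ?_)
        (fun k hk => mem_filter.mpr ⟨hmem k (by omega), decide_eq_true (by omega)⟩) (hperm.filter _)
        (fun k hk => ?_)
      · obtain ⟨hxw, hxm⟩ := mem_filter.mp hx
        have := hle x hxw
        simp only [ne_eq, decide_eq_true_eq] at hxm
        omega
      · rw [countAfterLast_filter_ne (by omega) (by omega),
          countAfterLast_filter_ne (by omega) (by omega)]
        exact hstat k (by omega)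
    calc EqvGen HypoStep w _ :=
          eqvGen_hypoStep_replicate_filter_replicate hle fun k hk => hmem k (by omega)
      _ = _ := by rw [hperm.count_eq, hstat m (by omega)]
      EqvGen HypoStep _ _ := eqvGen_hypoStep_append hmid _ _
      EqvGen HypoStep _ w' := (eqvGen_hypoStep_replicate_filter_replicate hle' hmem').symm

def canonicalWord (I s : ℕ → ℕ) : ℕ → List ℕ
  | 0 => []
  | n + 1 => replicate (I n - s n) n ++ canonicalWord I s n ++ replicate (s n) n

section CanonicalWord

variable {I s : ℕ → ℕ}

theorem lt_of_mem_canonicalWord {n x : ℕ} (h : x ∈ canonicalWord I s n) : x < n := by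
  induction n with
  | zero => simp [canonicalWord] at h
  | succ n ih =>
    simp only [canonicalWord, mem_append, mem_replicate] at h
    rcases h with (h | h) | h
    · omega
    · exact (ih h).trans (Nat.lt_succ_self n)
    · omega

theorem count_canonicalWord {n : ℕ} (hs : ∀ j < n, s j ≤ I j) (j : ℕ) :
    (canonicalWord I s n).count j = if j < n then I j else 0 := by
  induction n with
  | zero => simp [canonicalWord]
  | succ n ih =>
    rw [canonicalWord, count_append, count_append, ih fun j hj => hs j (by omega),
      count_replicate, count_replicate]
    have := hs n (by omega)
    by_cases hj : j = n
    · simp only [hj, BEq.rfl, ↓reduceIte, lt_self_iff_false, lt_add_iff_pos_right, Nat.lt_one_iff]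
      omega
    · simp only [beq_iff_eq, Ne.symm hj, ↓reduceIte, zero_add, add_zero, Nat.lt_add_one_iff]
      split_ifs <;> omega

theorem countAfterLast_canonicalWord {n k : ℕ} (hs : ∀ j < n, s j ≤ I j) (hI : ∀ j < n, 1 ≤ I j)
    (hk : k + 1 < n) : countAfterLast k (k + 1) (canonicalWord I s n) = s (k + 1) := by
  induction n with
  | zero => omega
  | succ n ih =>
    rcases (show k + 1 < n ∨ k + 1 = n by omega) with hk | rfl
    · have hn : (canonicalWord I s n).filter (· ≠ n) = canonicalWord I s n :=
        filter_eq_self.mpr fun x hx => by simpa using (lt_of_mem_canonicalWord hx).ne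
      have hfilter : (canonicalWord I s (n + 1)).filter (· ≠ n) = canonicalWord I s n := by
        rw [canonicalWord, filter_append, filter_append, hn]
        simp
      rw [← countAfterLast_filter_ne (c := n) (by omega) (by omega), hfilter,
        ih (fun j hj => hs j (by omega)) (fun j hj => hI j (by omega)) hk]
    · have hk : k ∈ canonicalWord I s (k + 1) := by
        rw [← count_pos_iff, count_canonicalWord (fun j hj => hs j (by omega)),
          if_pos k.lt_succ_self]
        exact hI k (by omega)
      have hle := countAfterLast_le_count (a := k) (b := k + 1) (w := canonicalWord I s (k + 1))
      rw [count_eq_zero_of_not_mem fun h => (lt_of_mem_canonicalWord h).false] at hle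
      rw [canonicalWord, countAfterLast_append_of_not_mem (by simp),
        countAfterLast_append_of_mem hk, count_replicate_self]
      omega

end CanonicalWord

section Fin

variable {r : ℕ} {i : Fin r → ℕ}

theorem eqvGen_hypoStep_map_val {w w' : List (Fin r)} (h : EqvGen HypoStep w w') :
    EqvGen HypoStep (w.map Fin.val) (w'.map Fin.val) :=
  eqvGen_hypoStep_map (Fin.val_strictMono.strictMonoOn _) (fun _ _ => Set.mem_univ _) h

theorem eqvGen_hypoStep_of_map_val {w w' : List (Fin r)}
    (h : EqvGen HypoStep (w.map Fin.val) (w'.map Fin.val)) : EqvGen HypoStep w w' := by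
  rcases r with _ | n
  · have h0 : ∀ l : List (Fin 0), l = [] := fun l =>
      eq_nil_iff_forall_not_mem.mpr fun x => x.elim0
    rw [h0 w, h0 w']
    exact .refl _
  · have hf : StrictMonoOn (Fin.ofNat (n + 1)) (Set.Iio (n + 1)) := by
      intro x hx y hy hxy
      simpa [Fin.lt_def, Nat.mod_eq_of_lt hx, Nat.mod_eq_of_lt hy] using hxy
    simpa [Function.comp_def] using eqvGen_hypoStep_map hf (w := w.map Fin.val)
      (fun x hx => by obtain ⟨x, -, rfl⟩ := mem_map.mp hx; exact x.2) h

abbrev HyposylvesterClasses (r : ℕ) (i : Fin r → ℕ) : Type :=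
  Quotient (Setoid.comap
    (Subtype.val : {w : List (Fin r) // ∀ k, w.count k = i k} → List (Fin r))
    (EqvGen.setoid HypoStep))

def hyposylvesterInvariant (i : Fin r → ℕ) :
    HyposylvesterClasses r i → (k : {k : Fin r // (k : ℕ) ≠ 0}) → Fin (i k + 1) :=
  Quotient.lift
    (fun w k => ⟨countAfterLast ((k : ℕ) - 1) k (w.1.map Fin.val), Nat.lt_succ_of_le <| by
      simpa [count_map_of_injective _ _ Fin.val_injective, w.2] using
        countAfterLast_le_count (a := (k : ℕ) - 1) (b := (k : ℕ)) (w := w.1.map Fin.val)⟩)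
    (fun w w' h => funext fun k => Fin.ext <| countAfterLast_eq_of_eqvGen_hypoStep
      (Nat.covBy_iff_add_one_eq.mpr (by have := k.2; omega)) (eqvGen_hypoStep_map_val h))

theorem hyposylvesterInvariant_injective (hi : ∀ k, 1 ≤ i k) :
    Injective (hyposylvesterInvariant i) := by
  rintro ⟨w⟩ ⟨w'⟩ h
  refine Quotient.sound (eqvGen_hypoStep_of_map_val ?_)
  refine eqvGen_hypoStep_of_perm_of_countAfterLast_eq (r - 1) (fun x hx => ?_) (fun k hk => ?_)
    ((perm_iff_count.mpr fun k => by rw [w.2, w'.2]).map _) (fun k hk => ?_)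
  · obtain ⟨x, -, rfl⟩ := mem_map.mp hx
    omega
  · exact mem_map.mpr ⟨⟨k, by omega⟩, count_pos_iff.mp (by rw [w.2]; exact hi _), rfl⟩
  · simpa [hyposylvesterInvariant] using congrArg Fin.val (congrFun h ⟨⟨k + 1, by omega⟩, by simp⟩)

theorem hyposylvesterInvariant_surjective (hi : ∀ k, 1 ≤ i k) :
    Surjective (hyposylvesterInvariant i) := by
  intro t
  let I : ℕ → ℕ := fun j => if h : j < r then i ⟨j, h⟩ else 0
  let s : ℕ → ℕ := fun j => if h : j < r ∧ j ≠ 0 then t ⟨⟨j, h.1⟩, h.2⟩ else 0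
  have hs : ∀ j < r, s j ≤ I j := fun j hj => by
    by_cases h0 : j = 0
    · simp [s, h0]
    · simpa [s, I, hj, h0, Nat.lt_succ_iff] using (t ⟨⟨j, hj⟩, h0⟩).2
  have hI : ∀ j < r, 1 ≤ I j := fun j hj => by simpa [I, hj] using hi ⟨j, hj⟩
  lift canonicalWord I s r to List (Fin r) using fun x hx => lt_of_mem_canonicalWord hx
    with w hw
  have hcount : ∀ k, w.count k = i k := fun k => by
    rw [← count_map_of_injective _ _ Fin.val_injective, hw, count_canonicalWord hs]
    simp [I]
  refine ⟨⟦⟨w, hcount⟩⟧, funext fun k => Fin.ext ?_⟩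
  have := countAfterLast_canonicalWord hs hI (k := (k : ℕ) - 1) (by omega)
  rw [Nat.sub_add_cancel (Nat.one_le_iff_ne_zero.mpr k.2)] at this
  simpa [hyposylvesterInvariant, hw, s, k.2] using this

end Fin

/-- The number of hyposylvester classes of words of packed evaluation
`(i₁, …, i_r)` equals `(i₂+1)(i₃+1)⋯(i_r+1)`. -/
theorem card_hyposylvester_classes (r : ℕ) (i : Fin r → ℕ) (hi : ∀ k, 1 ≤ i k) :
    Nat.card
      (Quotient (Setoid.comap
        (Subtype.val : {w : List (Fin r) // ∀ k, w.count k = i k} → List (Fin r))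
        (Relation.EqvGen.setoid HypoStep))) =
      ∏ k ∈ Finset.univ.filter (fun k : Fin r => (k : ℕ) ≠ 0), (i k + 1) := by
  rw [Nat.card_congr (Equiv.ofBijective _ ⟨hyposylvesterInvariant_injective hi,
      hyposylvesterInvariant_surjective hi⟩), Nat.card_eq_fintype_card, Fintype.card_pi]
  simp only [Fintype.card_fin]
  exact (Finset.prod_subtype _ (by simp) fun k => i k + 1).symm
end

section
/- A word over a totally ordered alphabet is a metasylvester canonical word (i.e., admits no elementary metasylvester rewriting increasing its number of inversions, equivalently avoids the patterns ab···a with a<b and b···ac···b with a<b<c) if and only if it avoids the pattern a···b···a with a<b, that is, no letter occurs between two occurrences of a strictly smaller letter. -/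
private lemma metasylvester_aux {α : Type*} [LinearOrder α] :
    ∀ (v u x y : List α) (a b : α), a < b →
    ((∃ (u' v' x' : List α) (a' b' : α), a' < b' ∧
        u ++ [a] ++ v ++ [b] ++ x ++ [a] ++ y = u' ++ [a', b'] ++ v' ++ [a'] ++ x') ∨
      (∃ (u' v' x' y' : List α) (a' b' c' : α), a' < b' ∧ b' < c' ∧
        u ++ [a] ++ v ++ [b] ++ x ++ [a] ++ y =
          u' ++ [b'] ++ v' ++ [a', c'] ++ x' ++ [b'] ++ y')) := by
  intro v
  induction v using List.reverseRecOn with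
  | nil =>
    intro u x y a b hab
    left
    exact ⟨u, x, y, a, b, hab, by simp⟩
  | append_singleton v c ih =>
    intro u x y a b hab
    rcases lt_trichotomy c a with h | h | h
    · right
      exact ⟨u, v, x, y, c, a, b, h, hab, by simp⟩
    · subst h
      left
      exact ⟨u ++ [c] ++ v, x, y, c, b, hab, by simp⟩
    · have := ih u ([b] ++ x) y a c h
      simp only [List.append_assoc] at this ⊢
      simpa using this

/-- A word over a totally ordered alphabet admits an elementary
metasylvester rewriting increasing its number of inversions — equivalently, it
contains one of the patterns `a b ⋯ a` (`a < b`) or `b ⋯ a c ⋯ b` (`a < b < c`) —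
if and only if it contains the pattern `a ⋯ b ⋯ a` (`a < b`), i.e. some letter occurs
between two occurrences of a strictly smaller letter.  Hence the metasylvester
canonical words are exactly the words avoiding `a ⋯ b ⋯ a`. -/
theorem metasylvester_canonical_words {α : Type*} [LinearOrder α] (w : List α) :
    ((∃ (u v x : List α) (a b : α), a < b ∧ w = u ++ [a, b] ++ v ++ [a] ++ x) ∨
      (∃ (u v x y : List α) (a b c : α), a < b ∧ b < c ∧
        w = u ++ [b] ++ v ++ [a, c] ++ x ++ [b] ++ y)) ↔
    (∃ (u v x y : List α) (a b : α), a < b ∧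
      w = u ++ [a] ++ v ++ [b] ++ x ++ [a] ++ y) := by
  constructor
  · rintro (⟨u, v, x, a, b, hab, rfl⟩ | ⟨u, v, x, y, a, b, c, hab, hbc, rfl⟩)
    · exact ⟨u, [], v, x, a, b, hab, by simp⟩
    · exact ⟨u, v ++ [a], x, y, b, c, hbc, by simp⟩
  · rintro ⟨u, v, x, y, a, b, hab, rfl⟩
    exact metasylvester_aux v u x y a b hab
end

section
/- The number of sylvester classes of m-permutations of n is the Fuss-Catalan number (1/(mn+1)) * binomial((m+1)n, n). -/
/-!
Inserting the letters of a word from right to left into a binary search tree (equal keys going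
left) is invariant under the sylvester relations, because two adjacent letters `a ≤ b < c` with
`b` already inserted are routed apart before they could meet. Conversely, reading a search tree
as right subtree, left subtree, root produces a word that rebuilds the tree and is reached from
every word with that tree by sylvester moves. Hence sylvester classes of words with content `M`
are search trees with content `M`.

Decomposing such a tree at its root, the number of search trees with content
`m • S + j • {b}`, `b` above `S`, satisfies the recursion of the Raney numbers
`R(j + 1, |S|) = (j + 1) / ((m + 1)|S| + j + 1) · C((m + 1)|S| + j + 1, |S|)`,
and the Fuss–Catalan number is `R(1, n)`.
-/

/-- One elementary sylvester rewriting: `u a c v b x ≡ u c a v b x` for `a ≤ b < c`. -/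
def SylvStep {α : Type*} [LinearOrder α] (w w' : List α) : Prop :=
  ∃ (u v x : List α) (a b c : α), a ≤ b ∧ b < c ∧
    w = u ++ [a, c] ++ v ++ [b] ++ x ∧ w' = u ++ [c, a] ++ v ++ [b] ++ x

open Relation Multiset

namespace BinaryTree

variable {α : Type*}

def content : BinaryTree α → Multiset α
  | nil => 0
  | node y l r => y ::ₘ (l.content + r.content)

@[simp] theorem content_nil : (nil : BinaryTree α).content = 0 := rfl

@[simp] theorem content_node (y : α) (l r : BinaryTree α) :
    (node y l r).content = y ::ₘ (l.content + r.content) := rfl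

def readingWord : BinaryTree α → List α
  | nil => []
  | node y l r => r.readingWord ++ l.readingWord ++ [y]

theorem coe_readingWord (T : BinaryTree α) : (T.readingWord : Multiset α) = T.content := by
  induction T with
  | nil => rfl
  | node y l r ihl ihr =>
    simp only [readingWord, ← coe_add, ihl, ihr, content_node, ← singleton_add]
    rw [add_comm, add_comm r.content]
    rfl

variable [LinearOrder α]

def IsSearchTree : BinaryTree α → Prop
  | nil => True
  | node y l r => (∀ x ∈ l.content, x ≤ y) ∧ (∀ x ∈ r.content, y < x) ∧
      l.IsSearchTree ∧ r.IsSearchTree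

def bstInsert (x : α) : BinaryTree α → BinaryTree α
  | nil => node x nil nil
  | node y l r => if x ≤ y then node y (bstInsert x l) r else node y l (bstInsert x r)

@[simp] theorem content_bstInsert (x : α) (T : BinaryTree α) :
    (bstInsert x T).content = x ::ₘ T.content := by
  induction T with
  | nil => rfl
  | node y l r ihl ihr =>
    by_cases h : x ≤ y <;> simp [bstInsert, h, ihl, ihr, cons_swap x y, add_comm]

theorem IsSearchTree.bstInsert (x : α) {T : BinaryTree α} (hT : T.IsSearchTree) :
    (T.bstInsert x).IsSearchTree := by
  induction T with
  | nil => simp [BinaryTree.bstInsert, IsSearchTree]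
  | node y l r ihl ihr =>
    obtain ⟨hl, hr, hls, hrs⟩ := hT
    by_cases h : x ≤ y
    · simp only [BinaryTree.bstInsert, if_pos h, IsSearchTree, content_bstInsert, mem_cons,
        forall_eq_or_imp]
      exact ⟨⟨h, hl⟩, hr, ihl hls, hrs⟩
    · simp only [BinaryTree.bstInsert, if_neg h, IsSearchTree, content_bstInsert, mem_cons,
        forall_eq_or_imp]
      exact ⟨hl, ⟨lt_of_not_ge h, hr⟩, hls, ihr hrs⟩

/-- At every node the keys `a` and `c` either take different directions or, when they take
the same one, `b` lies in that subtree too. -/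
theorem bstInsert_comm {a b c : α} (hab : a ≤ b) (hbc : b < c) {T : BinaryTree α}
    (hT : T.IsSearchTree) (hb : b ∈ T.content) :
    bstInsert a (bstInsert c T) = bstInsert c (bstInsert a T) := by
  induction T with
  | nil => simp at hb
  | node y l r ihl ihr =>
    obtain ⟨hl, hr, hls, hrs⟩ := hT
    simp only [content_node, mem_cons, mem_add] at hb
    rcases le_or_gt c y with hcy | hyc
    · have hbl : b ∈ l.content := by
        rcases hb with rfl | hb | hb
        · exact absurd hcy (not_le.2 hbc)
        · exact hb
        · exact absurd (hr b hb) (not_lt.2 (hbc.le.trans hcy))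
      simp [BinaryTree.bstInsert, hcy, hab.trans (hbc.le.trans hcy), ihl hls hbl]
    · rcases le_or_gt a y with hay | hya
      · simp [BinaryTree.bstInsert, hay, not_le.2 hyc]
      · have hbr : b ∈ r.content := by
          rcases hb with rfl | hb | hb
          · exact absurd hab (not_le.2 hya)
          · exact absurd ((hab.trans (hl b hb))) (not_le.2 hya)
          · exact hb
        simp [BinaryTree.bstInsert, not_le.2 hya, not_le.2 hyc, ihr hrs hbr]

theorem foldr_bstInsert_node (y : α) (w : List α) (l r : BinaryTree α) :
    w.foldr bstInsert (node y l r) =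
      node y ((w.filter (· ≤ y)).foldr bstInsert l) ((w.filter (y < ·)).foldr bstInsert r) := by
  induction w with
  | nil => rfl
  | cons x w ih =>
    by_cases h : x ≤ y
    · simp [h, ih, bstInsert, not_lt.2 h]
    · simp [h, ih, bstInsert, lt_of_not_ge h]

end BinaryTree

open BinaryTree

section Sylvester

variable {α : Type*} [LinearOrder α]

/-- The sylvester P-symbol. -/
def sylvesterTree (w : List α) : BinaryTree α := w.foldr bstInsert nil

@[simp] theorem sylvesterTree_nil : sylvesterTree ([] : List α) = nil := rfl

@[simp] theorem sylvesterTree_cons (x : α) (w : List α) :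
    sylvesterTree (x :: w) = bstInsert x (sylvesterTree w) := rfl

theorem sylvesterTree_append (u w : List α) :
    sylvesterTree (u ++ w) = u.foldr bstInsert (sylvesterTree w) :=
  List.foldr_append

theorem content_sylvesterTree (w : List α) : (sylvesterTree w).content = w := by
  induction w with
  | nil => rfl
  | cons x w ih => simp [ih]

theorem isSearchTree_sylvesterTree (w : List α) : (sylvesterTree w).IsSearchTree := by
  induction w with
  | nil => trivial
  | cons x w ih => exact ih.bstInsert x

theorem sylvesterTree_append_singleton (w : List α) (y : α) :
    sylvesterTree (w ++ [y]) =
      node y (sylvesterTree (w.filter (· ≤ y))) (sylvesterTree (w.filter (y < ·))) :=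
  (sylvesterTree_append w [y]).trans (foldr_bstInsert_node y w nil nil)

theorem sylvesterTree_readingWord {T : BinaryTree α} (hT : T.IsSearchTree) :
    sylvesterTree T.readingWord = T := by
  induction T with
  | nil => rfl
  | node y l r ihl ihr =>
    obtain ⟨hl, hr, hls, hrs⟩ := hT
    have hmem : ∀ {x} {S : BinaryTree α}, x ∈ S.readingWord → x ∈ S.content := fun h => by
      rw [← coe_readingWord]; exact h
    have hl₁ : l.readingWord.filter (· ≤ y) = l.readingWord :=
      List.filter_eq_self.2 fun x hx => by simpa using hl x (hmem hx)
    have hl₂ : l.readingWord.filter (y < ·) = [] :=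
      List.filter_eq_nil_iff.2 fun x hx => by simpa using hl x (hmem hx)
    have hr₁ : r.readingWord.filter (· ≤ y) = [] :=
      List.filter_eq_nil_iff.2 fun x hx => by simpa using hr x (hmem hx)
    have hr₂ : r.readingWord.filter (y < ·) = r.readingWord :=
      List.filter_eq_self.2 fun x hx => by simpa using hr x (hmem hx)
    rw [readingWord, List.append_assoc, sylvesterTree_append, sylvesterTree_append_singleton,
      hl₁, hl₂, ihl hls, foldr_bstInsert_node, hr₁, hr₂]
    exact congrArg _ (ihr hrs)

theorem SylvStep.append {w w' : List α} (h : SylvStep w w') (p q : List α) :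
    SylvStep (p ++ w ++ q) (p ++ w' ++ q) := by
  obtain ⟨u, v, x, a, b, c, hab, hbc, rfl, rfl⟩ := h
  exact ⟨p ++ u, v, x ++ q, a, b, c, hab, hbc, by simp, by simp⟩

theorem Relation.EqvGen.sylvStep_append {w w' : List α} (h : EqvGen SylvStep w w')
    (p q : List α) :
    EqvGen SylvStep (p ++ w ++ q) (p ++ w' ++ q) := by
  induction h with
  | rel _ _ h => exact .rel _ _ (h.append p q)
  | refl _ => exact .refl _
  | symm _ _ _ ih => exact .symm _ _ ih
  | trans _ _ _ _ _ ih₁ ih₂ => exact .trans _ _ _ ih₁ ih₂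

theorem sylvesterTree_eq_of_sylvStep {w w' : List α} (h : SylvStep w w') :
    sylvesterTree w = sylvesterTree w' := by
  obtain ⟨u, v, x, a, b, c, hab, hbc, rfl, rfl⟩ := h
  have hcomm : bstInsert a (bstInsert c (sylvesterTree (v ++ b :: x))) =
      bstInsert c (bstInsert a (sylvesterTree (v ++ b :: x))) :=
    bstInsert_comm hab hbc (isSearchTree_sylvesterTree _) (by simp [content_sylvesterTree])
  simp only [List.append_assoc, sylvesterTree_append u, List.cons_append, List.nil_append,
    sylvesterTree_cons, hcomm]

theorem eqvGen_sylvStep_cons_append {a y : α} (hay : a ≤ y) {v : List α}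
    (hv : ∀ c ∈ v, y < c) (s t : List α) :
    EqvGen SylvStep (a :: v ++ s ++ y :: t) (v ++ a :: s ++ y :: t) := by
  induction v with
  | nil => exact .refl _
  | cons c v ih =>
    have hstep : SylvStep (a :: c :: v ++ s ++ y :: t) (c :: a :: v ++ s ++ y :: t) :=
      ⟨[], v ++ s, t, a, y, c, hay, hv c (List.mem_cons_self ..), by simp, by simp⟩
    refine .trans _ _ _ (.rel _ _ hstep) ?_
    simpa using (ih fun d hd => hv d (List.mem_cons_of_mem c hd)).sylvStep_append [c] []

theorem eqvGen_sylvStep_partition (y : α) (w t : List α) :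
    EqvGen SylvStep (w ++ y :: t) (w.filter (y < ·) ++ w.filter (· ≤ y) ++ y :: t) := by
  induction w with
  | nil => exact .refl _
  | cons x w ih =>
    have ih' := ih.sylvStep_append [x] []
    simp only [List.singleton_append, List.append_nil] at ih'
    by_cases h : x ≤ y
    · refine .trans _ _ _ ih' ?_
      simpa [h, not_lt.2 h] using eqvGen_sylvStep_cons_append h
        (v := w.filter (y < ·)) (by simp) (w.filter (· ≤ y)) t
    · simpa [h, lt_of_not_ge h] using ih'

theorem eqvGen_sylvStep_readingWord (w : List α) :
    EqvGen SylvStep w (sylvesterTree w).readingWord := by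
  induction hn : w.length using Nat.strong_induction_on generalizing w with
  | _ n ih =>
    rcases List.eq_nil_or_concat' w with rfl | ⟨w, y, rfl⟩
    · exact .refl _
    have hlen : ∀ p : α → Bool, (w.filter p).length < n := fun p => by
      have := List.length_filter_le p w
      rw [List.length_append, List.length_singleton] at hn
      omega
    rw [sylvesterTree_append_singleton, readingWord]
    have hsmall := (ih _ (hlen _) (w.filter (· ≤ y)) rfl).sylvStep_append (w.filter (y < ·)) [y]
    have hbig := (ih _ (hlen _) (w.filter (y < ·)) rfl).sylvStep_append []
      ((sylvesterTree (w.filter (· ≤ y))).readingWord ++ [y])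
    simp only [List.nil_append, ← List.append_assoc] at hbig
    exact .trans _ _ _ (eqvGen_sylvStep_partition y w []) (.trans _ _ _ hsmall hbig)

theorem eqvGen_sylvStep_iff_sylvesterTree_eq {w w' : List α} :
    EqvGen SylvStep w w' ↔ sylvesterTree w = sylvesterTree w' := by
  constructor
  · intro h
    induction h with
    | rel _ _ h => exact sylvesterTree_eq_of_sylvStep h
    | refl _ => rfl
    | symm _ _ _ ih => exact ih.symm
    | trans _ _ _ _ _ ih₁ ih₂ => exact ih₁.trans ih₂
  · intro h
    refine .trans _ _ _ (eqvGen_sylvStep_readingWord w) ?_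
    rw [h]
    exact .symm _ _ (eqvGen_sylvStep_readingWord w')

end Sylvester

section SearchTrees

variable {α : Type*} [LinearOrder α]

def SearchTrees (M : Multiset α) : Type _ :=
  {T : BinaryTree α // T.IsSearchTree ∧ T.content = M}

def sylvesterClassEquivSearchTrees (M : Multiset α) (p : List α → Prop)
    (hp : ∀ w, p w ↔ (w : Multiset α) = M) :
    Quotient (Setoid.comap (Subtype.val : {w // p w} → List α) (EqvGen.setoid SylvStep)) ≃
      SearchTrees M where
  toFun := Quotient.lift
    (fun w => ⟨sylvesterTree w.1, isSearchTree_sylvesterTree _,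
      (content_sylvesterTree _).trans ((hp _).1 w.2)⟩)
    (fun _ _ h => Subtype.ext (eqvGen_sylvStep_iff_sylvesterTree_eq.1 h))
  invFun T := Quotient.mk _ ⟨T.1.readingWord, (hp _).2 ((coe_readingWord _).trans T.2.2)⟩
  left_inv := Quotient.ind fun _ => Quotient.sound <| eqvGen_sylvStep_iff_sylvesterTree_eq.2 <|
    sylvesterTree_readingWord (isSearchTree_sylvesterTree _)
  right_inv T := Subtype.ext (sylvesterTree_readingWord T.2.1)

instance (M : Multiset α) : Finite (SearchTrees M) :=
  Finite.of_injective (β := (M.lists.toFinset : Set (List α)))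
    (fun T => ⟨T.1.readingWord, by simp [coe_readingWord, T.2.2]⟩)
    fun T T' h => Subtype.ext <| by
      rw [← sylvesterTree_readingWord T.2.1, ← sylvesterTree_readingWord T'.2.1]
      exact congrArg sylvesterTree (congrArg Subtype.val h)

theorem card_searchTrees_zero : Nat.card (SearchTrees (0 : Multiset α)) = 1 := by
  refine Nat.card_eq_one_iff_exists.2 ⟨⟨nil, trivial, rfl⟩, fun ⟨T, _, hT⟩ => ?_⟩
  cases T with
  | nil => rfl
  | node y l r => simp at hT

def SearchTrees.ofRoot {M : Multiset α} (y : M.toFinset)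
    (l : SearchTrees ((M.filter (· ≤ (y : α))).erase y))
    (r : SearchTrees (M.filter ((y : α) < ·))) :
    SearchTrees M :=
  ⟨.node y l.1 r.1,
    ⟨fun x hx => by
      rw [l.2.2] at hx
      exact (mem_filter.1 (mem_of_mem_erase hx)).2,
    fun x hx => by
      rw [r.2.2] at hx
      exact (mem_filter.1 hx).2,
    l.2.1, r.2.1⟩, by
    have hy : (y : α) ∈ M.filter (· ≤ (y : α)) :=
      mem_filter.2 ⟨mem_toFinset.1 y.2, le_rfl⟩
    rw [content_node, l.2.2, r.2.2, ← cons_add, cons_erase hy]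
    simpa using filter_add_not (· ≤ (y : α)) M⟩

theorem SearchTrees.ofRoot_bijective {M : Multiset α} (hM : M ≠ 0) :
    Function.Bijective fun t : Σ y : M.toFinset,
        SearchTrees ((M.filter (· ≤ (y : α))).erase y) ×
          SearchTrees (M.filter ((y : α) < ·)) =>
      SearchTrees.ofRoot t.1 t.2.1 t.2.2 := by
  constructor
  · rintro ⟨y, l, r⟩ ⟨y', l', r'⟩ h
    obtain ⟨hy, hl, hr⟩ := BinaryTree.node.inj (congrArg Subtype.val h)
    obtain rfl : y = y' := Subtype.ext hy
    obtain rfl : l = l' := Subtype.ext hl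
    obtain rfl : r = r' := Subtype.ext hr
    rfl
  · rintro ⟨_ | ⟨y, l, r⟩, ⟨hl, hr, hls, hrs⟩, rfl⟩
    · exact absurd rfl hM
    have hfl : (node y l r).content.filter (· ≤ y) = y ::ₘ l.content := by
      rw [content_node, filter_cons_of_pos (p := (· ≤ y)) _ le_rfl, filter_add,
        filter_eq_self.2 hl,
        filter_eq_nil.2 fun x hx => not_le.2 (hr x hx), add_zero]
    have hfr : (node y l r).content.filter (y < ·) = r.content := by
      rw [content_node, filter_cons_of_neg (p := (y < ·)) _ (lt_irrefl y), filter_add,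
        filter_eq_nil.2 fun x hx => not_lt.2 (hl x hx), filter_eq_self.2 hr, zero_add]
    exact ⟨⟨⟨y, by simp⟩, ⟨l, hls, by simp [hfl]⟩, ⟨r, hrs, hfr.symm⟩⟩, rfl⟩

theorem card_searchTrees_of_ne_zero {M : Multiset α} (hM : M ≠ 0) :
    Nat.card (SearchTrees M) = ∑ y ∈ M.toFinset,
      Nat.card (SearchTrees ((M.filter (· ≤ y)).erase y)) *
        Nat.card (SearchTrees (M.filter (y < ·))) := by
  rw [← Nat.card_eq_of_bijective _ (SearchTrees.ofRoot_bijective hM), Nat.card_sigma,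
    ← Finset.sum_coe_sort M.toFinset]
  simp only [Nat.card_prod]

end SearchTrees

section Raney

/-- Raney numbers: `raney m j n` counts ordered forests of `j` complete `(m+1)`-ary trees with
`n` internal nodes in total; the recursion looks at whether the first tree is a leaf. -/
def raney (m : ℕ) : ℕ → ℕ → ℕ
  | _, 0 => 1
  | 0, _ + 1 => 0
  | j + 1, n + 1 => raney m j (n + 1) + raney m (j + 1 + m) n
termination_by j n => (n, j)

variable (m : ℕ)

@[simp] theorem raney_zero_right (j : ℕ) : raney m j 0 = 1 := by
  cases j <;> rw [raney]

@[simp] theorem raney_zero_left (n : ℕ) : raney m 0 (n + 1) = 0 := by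
  rw [raney]

theorem raney_succ_succ (j n : ℕ) :
    raney m (j + 1) (n + 1) = raney m j (n + 1) + raney m (j + 1 + m) n := by
  rw [raney]

theorem raney_one_succ (n : ℕ) : raney m 1 (n + 1) = raney m (m + 1) n := by
  rw [raney_succ_succ, raney_zero_left, zero_add, zero_add, add_comm]

/-- Concatenation of forests. -/
theorem sum_range_raney_mul_raney (a : ℕ) : ∀ b K : ℕ,
    ∑ k ∈ Finset.range (K + 1), raney m a k * raney m b (K - k) = raney m (a + b) K
  | 0, K => by
    rw [Finset.sum_eq_single_of_mem K (Finset.self_mem_range_succ K)]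
    · simp
    · intro k hk hkK
      obtain ⟨i, hi⟩ : ∃ i, K - k = i + 1 := ⟨K - k - 1, by grind⟩
      rw [hi, raney_zero_left, mul_zero]
  | b + 1, 0 => by simp
  | b + 1, K + 1 => by
    have hsplit : ∀ k ∈ Finset.range (K + 1),
        raney m a k * raney m (b + 1) (K + 1 - k) =
          raney m a k * raney m b (K + 1 - k) + raney m a k * raney m (b + 1 + m) (K - k) := by
      intro k hk
      rw [show K + 1 - k = K - k + 1 by grind, raney_succ_succ, mul_add]
    rw [Finset.sum_range_succ, Finset.sum_congr rfl hsplit, Finset.sum_add_distrib,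
      sum_range_raney_mul_raney a (b + 1 + m) K, ← add_assoc a b 1, raney_succ_succ,
      ← sum_range_raney_mul_raney a b (K + 1), Finset.sum_range_succ (n := K + 1)]
    simp only [Nat.sub_self, raney_zero_right, mul_one]
    ring_nf

theorem raney_add_sum_range (j n : ℕ) :
    raney m (j + 1) n + ∑ i ∈ Finset.range n, raney m m i * raney m (j + 2) (n - 1 - i) =
      raney m (j + 2) n := by
  cases n with
  | zero => simp
  | succ K =>
    simp only [Nat.add_sub_cancel, sum_range_raney_mul_raney, raney_succ_succ m (j + 1)]
    ring_nf

theorem raney_mul : ∀ n j : ℕ,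
    raney m j n * ((m + 1) * n + j) = j * ((m + 1) * n + j).choose n
  | 0, j => by simp
  | n + 1, 0 => by simp
  | n + 1, j + 1 => by
    set N := (m + 1) * (n + 1) + j with hN
    have hA := raney_mul (n + 1) j
    have hB := raney_mul n (j + 1 + m)
    have hy := Nat.choose_succ_right_eq N n
    rw [← hN] at hA
    rw [show (m + 1) * n + (j + 1 + m) = N by ring] at hB
    rw [show N - n = m * (n + 1) + j + 1 by grind] at hy
    apply Nat.eq_of_mul_eq_mul_left (show 0 < N by positivity)
    rw [show (m + 1) * (n + 1) + (j + 1) = N + 1 by ring, raney_succ_succ, Nat.choose_succ_succ']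
    zify at hN hA hB hy ⊢
    linear_combination (↑N + 1 : ℤ) * hA + (↑N + 1 : ℤ) * hB - (↑m + 1 : ℤ) * hy +
      (↑m * ↑(N.choose n) - ↑(N.choose (n + 1)) : ℤ) * hN

theorem raney_one_eq_choose_div (n : ℕ) :
    raney m 1 n = ((m + 1) * n).choose n / (m * n + 1) := by
  have h₁ := raney_mul m n 1
  have h₂ := Nat.choose_mul_succ_eq ((m + 1) * n) n
  rw [show (m + 1) * n + 1 - n = m * n + 1 by grind] at h₂
  refine (Nat.div_eq_of_eq_mul_left (by positivity) ?_).symm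
  apply Nat.eq_of_mul_eq_mul_right (show 0 < (m + 1) * n + 1 by positivity)
  rw [one_mul] at h₁
  rw [h₂, ← h₁]
  ring

end Raney

section Content

theorem Multiset.count_erase {α : Type*} [DecidableEq α] (a y : α) (M : Multiset α) :
    count a (M.erase y) = if a = y then count a M - 1 else count a M := by
  split_ifs with h
  · rw [h, count_erase_self]
  · exact count_erase_of_ne h M

variable {α : Type*} [LinearOrder α] (m : ℕ)

theorem count_nsmul_val_add_replicate (S : Finset α) (b a : α) (j : ℕ) :
    count a (m • S.val + replicate j b) =
      (if a ∈ S then m else 0) + (if a = b then j else 0) := by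
  simp only [count_add, count_nsmul, count_eq_of_nodup S.nodup, Finset.mem_val, count_replicate,
    eq_comm (a := b)]
  split_ifs <;> simp

variable {S : Finset α} {b : α}

theorem toFinset_nsmul_val_add_replicate (hm : m ≠ 0) (j : ℕ) :
    (m • S.val + replicate (j + 1) b).toFinset = insert b S := by
  ext a
  simp only [mem_toFinset, mem_add, mem_nsmul_of_ne_zero hm, Finset.mem_val, mem_replicate,
    Finset.mem_insert]
  grind

theorem nsmul_val_eq_erase_max' (hne : S.Nonempty) :
    m • S.val = m • (S.erase (S.max' hne)).val + replicate m (S.max' hne) := by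
  ext a
  simp only [count_nsmul_val_add_replicate, count_nsmul, count_eq_of_nodup S.nodup,
    Finset.mem_val, Finset.mem_erase]
  have := S.max'_mem hne
  split_ifs <;> grind

variable (hS : ∀ x ∈ S, x < b)
include hS

theorem filter_le_erase_nsmul_val_add_replicate {y : α} (hy : y ∈ S) (j : ℕ) :
    ((m • S.val + replicate j b).filter (· ≤ y)).erase y =
      m • (S.filter (· < y)).val + replicate (m - 1) y := by
  have := hS y hy
  ext a
  simp only [count_erase, count_filter, count_nsmul_val_add_replicate, Finset.mem_filter]
  split_ifs <;> grind

theorem filter_gt_nsmul_val_add_replicate {y : α} (hy : y ∈ S) (j : ℕ) :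
    (m • S.val + replicate j b).filter (y < ·) =
      m • (S.filter (y < ·)).val + replicate j b := by
  have := hS y hy
  ext a
  simp only [count_filter, count_nsmul_val_add_replicate, Finset.mem_filter]
  split_ifs <;> grind

theorem filter_le_erase_nsmul_val_add_replicate_self (j : ℕ) :
    ((m • S.val + replicate (j + 1) b).filter (· ≤ b)).erase b =
      m • S.val + replicate j b := by
  ext a
  simp only [count_erase, count_filter, count_nsmul_val_add_replicate]
  split_ifs <;> grind

theorem filter_gt_nsmul_val_add_replicate_self (j : ℕ) :
    (m • S.val + replicate j b).filter (b < ·) = 0 := by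
  ext a
  simp only [count_filter, count_nsmul_val_add_replicate, count_zero]
  split_ifs <;> grind

end Content

section Counting

variable {α : Type*} [LinearOrder α]

theorem Finset.sum_card_filter_lt_card_filter_gt {β : Type*} [AddCommMonoid β] (S : Finset α)
    (g : ℕ → ℕ → β) :
    ∑ y ∈ S, g (S.filter (· < y)).card (S.filter (y < ·)).card =
      ∑ i ∈ Finset.range S.card, g i (S.card - 1 - i) := by
  induction S using Finset.induction_on_max generalizing g with
  | empty => simp
  | insert b S hS ih =>
    have hb : b ∉ S := fun h => lt_irrefl b (hS b h)
    have hlt : ∀ y ∈ S, (insert b S).filter (· < y) = S.filter (· < y) := fun y hy => by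
      rw [Finset.filter_insert, if_neg (not_lt.2 (hS y hy).le)]
    have hgt : ∀ y ∈ S, (insert b S).filter (y < ·) = insert b (S.filter (y < ·)) :=
      fun y hy => by rw [Finset.filter_insert, if_pos (hS y hy)]
    have hbl : (insert b S).filter (· < b) = S := by
      ext x; simp only [Finset.mem_filter, Finset.mem_insert]; grind
    have hbg : (insert b S).filter (b < ·) = ∅ := by
      ext x; simp only [Finset.mem_filter, Finset.mem_insert]; grind
    rw [Finset.sum_insert hb, hbl, hbg, Finset.card_insert_of_notMem hb,
      Finset.sum_range_succ, add_comm]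
    congr 1
    · rw [Finset.sum_congr rfl fun y hy => by
        rw [hlt y hy, hgt y hy, Finset.card_insert_of_notMem (by simp [hb])]]
      rw [ih fun p q => g p (q + 1)]
      refine Finset.sum_congr rfl fun i hi => ?_
      rw [Finset.mem_range] at hi
      congr 1
      omega
    · simp

variable {m : ℕ}

/-- In a search tree with content `m • S + j • {b}`, the root is either `b`, leaving
`m • S + (j - 1) • {b}` on its left, or some `y ∈ S`, which splits the keys into the two
contents `m • S_{<y} + (m - 1) • {y}` and `m • S_{>y} + j • {b}` of the same shape. -/
theorem card_searchTrees_nsmul_val_add_replicate (hm : 1 ≤ m) (S : Finset α) (b : α) (j : ℕ)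
    (hS : ∀ x ∈ S, x < b) :
    Nat.card (SearchTrees (m • S.val + replicate j b)) = raney m (j + 1) S.card := by
  induction hn : S.card using Nat.strong_induction_on generalizing S b j with
  | _ n ih =>
  induction j with
  | zero =>
    rw [replicate_zero, add_zero]
    rcases S.eq_empty_or_nonempty with rfl | hne
    · subst hn
      simpa using card_searchTrees_zero
    have hcard : (S.erase (S.max' hne)).card + 1 = n := by
      rw [Finset.card_erase_add_one (S.max'_mem hne), hn]
    rw [nsmul_val_eq_erase_max' m hne,
      ih _ (by omega) _ _ _ (fun _ => S.lt_max'_of_mem_erase_max' hne) rfl, ← hcard,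
      raney_one_succ]
  | succ j ihj =>
    have hb : b ∉ S := fun h => lt_irrefl b (hS b h)
    have hlt : ∀ y ∈ S, (S.filter (· < y)).card < n := fun y hy =>
      hn ▸ Finset.card_lt_card (Finset.filter_ssubset.2 ⟨y, hy, lt_irrefl y⟩)
    have hgt : ∀ y ∈ S, (S.filter (y < ·)).card < n := fun y hy =>
      hn ▸ Finset.card_lt_card (Finset.filter_ssubset.2 ⟨y, hy, lt_irrefl y⟩)
    rw [card_searchTrees_of_ne_zero (by simp), toFinset_nsmul_val_add_replicate m (by omega),
      Finset.sum_insert hb, filter_le_erase_nsmul_val_add_replicate_self m hS,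
      filter_gt_nsmul_val_add_replicate_self m hS, ihj, card_searchTrees_zero, mul_one,
      Finset.sum_congr rfl fun y hy => by
        rw [filter_le_erase_nsmul_val_add_replicate m hS hy,
          filter_gt_nsmul_val_add_replicate m hS hy,
          ih _ (hlt y hy) _ _ _ (fun x hx => (Finset.mem_filter.1 hx).2) rfl,
          ih _ (hgt y hy) _ _ _ (fun x hx => hS x (Finset.mem_filter.1 hx).1) rfl,
          Nat.sub_add_cancel hm],
      Finset.sum_card_filter_lt_card_filter_gt S
        fun p q => raney m m p * raney m (j + 1 + 1) q, hn]
    exact raney_add_sum_range m j n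

theorem card_searchTrees_nsmul_val (hm : 1 ≤ m) (S : Finset α) :
    Nat.card (SearchTrees (m • S.val)) = raney m 1 S.card := by
  rcases S.eq_empty_or_nonempty with rfl | hne
  · simpa using card_searchTrees_zero
  rw [nsmul_val_eq_erase_max' m hne, card_searchTrees_nsmul_val_add_replicate hm _ _ _
    fun _ => S.lt_max'_of_mem_erase_max' hne,
    ← raney_one_succ, Finset.card_erase_add_one (S.max'_mem hne)]

end Counting

/-- The number of sylvester classes of `m`-permutations of `n`
is the Fuss–Catalan number `(1/(mn+1)) * C((m+1)n, n)`. -/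
theorem card_sylvester_classes_mPermutations (m n : ℕ) (hm : 1 ≤ m) :
    Nat.card
      (Quotient (Setoid.comap
        (Subtype.val : {w : List (Fin n) // ∀ k, w.count k = m} → List (Fin n))
        (Relation.EqvGen.setoid SylvStep))) =
      Nat.choose ((m + 1) * n) n / (m * n + 1) := by
  have hcontent : ∀ w : List (Fin n),
      (∀ k, w.count k = m) ↔ (w : Multiset (Fin n)) = m • Finset.univ.val := fun w => by
    simp [Multiset.ext, count_nsmul]
  rw [Nat.card_congr (sylvesterClassEquivSearchTrees _ _ hcontent), card_searchTrees_nsmul_val hm,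
    Finset.card_univ, Fintype.card_fin, raney_one_eq_choose_div]
end

section
/- The exponential generating function for the number of m-packed words satisfies: if a_n(m) denotes the number of packed words of length mn whose evaluation is a multiple of m (each letter appears a positive multiple of m times, letters forming an initial segment), then ∑_{n≥0} a_n(m) t^n/(mn)! = (1 − ∑_{n≥1} t^n/(mn)!)^{-1}. -/
/-- A word over `ℕ` is packed if its set of letters is an initial segment `{0,…,k-1}`. -/
def IsPacked (w : List ℕ) : Prop := ∀ k : ℕ, k + 1 ∈ w → k ∈ w

/-- The number of `m`-packed words of degree `n`: packed words of length `mn` in which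
every occurring letter appears a number of times divisible by `m`. -/
noncomputable def mPackedCount (m n : ℕ) : ℕ :=
  Nat.card {w : List ℕ //
    w.length = m * n ∧ IsPacked w ∧ ∀ a ∈ w, m ∣ w.count a}

/-!
Deleting the smallest letter `0` from a nonempty packed word and lowering the other letters by
one leaves a packed word, and the original word is recovered from it together with the mask of
positions of its zeros. When every multiplicity must satisfy `P`, the number `c` of zeros ranges
over the `c ≥ 1` with `P c` and the mask over the `C(L, c)` bit strings with `c` ones, whence
`a_L = ∑_{c ≥ 1, P c} C(L, c) a_{L-c}`. For `P = (m ∣ ·)` and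
`L = mn` this reads `a_n = ∑_{k=1}^n C(mn, mk) a_{n-k}`, which after division by `(mn)!` is the
coefficientwise form of `A · (1 - B) = 1`.
-/

def zeroMask (w : List ℕ) : List Bool := w.map (· = 0)

def stripZeros (w : List ℕ) : List ℕ := (w.filter (· ≠ 0)).map (· - 1)

def fillZeros : List Bool → List ℕ → List ℕ
  | [], _ => []
  | true :: bs, l => 0 :: fillZeros bs l
  | false :: bs, l => (l.headD 0 + 1) :: fillZeros bs l.tail

lemma length_zeroMask (w : List ℕ) : (zeroMask w).length = w.length :=
  List.length_map _

lemma count_true_zeroMask (w : List ℕ) : (zeroMask w).count true = w.count 0 := by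
  induction w with
  | nil => rfl
  | cons a w ih => by_cases ha : a = 0 <;> simp_all [zeroMask]

lemma count_stripZeros (w : List ℕ) (b : ℕ) : (stripZeros w).count b = w.count (b + 1) := by
  induction w with
  | nil => rfl
  | cons a w ih => rcases a with _ | a <;> simp_all [stripZeros, List.count_cons]

lemma mem_stripZeros {w : List ℕ} {b : ℕ} : b ∈ stripZeros w ↔ b + 1 ∈ w := by
  rw [← List.count_pos_iff, ← List.count_pos_iff, count_stripZeros]

lemma length_stripZeros (w : List ℕ) : (stripZeros w).length = (zeroMask w).count false := by
  induction w with
  | nil => rfl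
  | cons a w ih => by_cases ha : a = 0 <;> simp_all [stripZeros, zeroMask]

lemma fillZeros_zeroMask_stripZeros (w : List ℕ) :
    fillZeros (zeroMask w) (stripZeros w) = w := by
  induction w with
  | nil => rfl
  | cons a w ih => rcases a with _ | a <;> simp_all [fillZeros, zeroMask, stripZeros]

lemma zeroMask_fillZeros (bs : List Bool) (l : List ℕ) : zeroMask (fillZeros bs l) = bs := by
  induction bs generalizing l with
  | nil => rfl
  | cons b bs ih => cases b <;> simp_all [fillZeros, zeroMask]

lemma stripZeros_fillZeros {bs : List Bool} {l : List ℕ} (h : l.length = bs.count false) :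
    stripZeros (fillZeros bs l) = l := by
  induction bs generalizing l with
  | nil => simp_all [fillZeros, stripZeros]
  | cons b bs ih =>
    cases b
    · obtain _ | ⟨a, l⟩ := l
      · simp at h
      · simpa [fillZeros, stripZeros] using ih (by simpa using h)
    · simpa [fillZeros, stripZeros] using ih (by simpa using h)

lemma count_zero_fillZeros (bs : List Bool) (l : List ℕ) :
    (fillZeros bs l).count 0 = bs.count true := by
  rw [← count_true_zeroMask, zeroMask_fillZeros]

lemma length_fillZeros (bs : List Bool) (l : List ℕ) : (fillZeros bs l).length = bs.length := by
  rw [← length_zeroMask, zeroMask_fillZeros]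

namespace IsPacked

variable {w : List ℕ}

lemma mem_of_le (h : IsPacked w) {a b : ℕ} (ha : a ∈ w) (hb : b ≤ a) : b ∈ w := by
  induction a, hb using Nat.le_induction with
  | base => exact ha
  | succ a _ ih => exact ih (h a ha)

lemma zero_mem (h : IsPacked w) (hw : w ≠ []) : 0 ∈ w := by
  obtain ⟨a, ha⟩ := List.exists_mem_of_ne_nil w hw
  exact h.mem_of_le ha (Nat.zero_le a)

lemma lt_length (h : IsPacked w) {a : ℕ} (ha : a ∈ w) : a < w.length := by
  have hsub : Finset.range (a + 1) ⊆ w.toFinset := fun b hb =>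
    List.mem_toFinset.2 (h.mem_of_le ha (Finset.mem_range_succ_iff.1 hb))
  simpa using (Finset.card_le_card hsub).trans w.toFinset_card_le

lemma stripZeros (h : IsPacked w) : IsPacked (_root_.stripZeros w) := fun _ hk =>
  mem_stripZeros.2 (h _ (mem_stripZeros.1 hk))

lemma of_stripZeros (h0 : 0 ∈ w) (h : IsPacked (_root_.stripZeros w)) : IsPacked w
  | 0, _ => h0
  | k + 1, hk => mem_stripZeros.1 (h k (mem_stripZeros.2 hk))

end IsPacked

def boolLists (L c : ℕ) : Set (List Bool) := {bs | bs.length = L ∧ bs.count true = c}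

lemma count_false_of_mem_boolLists {L c : ℕ} {bs : List Bool} (h : bs ∈ boolLists L c) :
    bs.count false = L - c := by
  rw [← h.1, ← h.2, ← List.count_false_add_count_true, Nat.add_sub_cancel]

lemma finite_boolLists (L c : ℕ) : (boolLists L c).Finite :=
  (List.finite_length_eq Bool L).subset fun _ h => h.1

lemma boolLists_zero_right (L : ℕ) : boolLists L 0 = {List.replicate L false} := by
  ext bs
  simp [boolLists, List.eq_replicate_iff, List.count_eq_zero]

lemma boolLists_zero_succ (c : ℕ) : boolLists 0 (c + 1) = ∅ := by
  ext bs
  simp +contextual [boolLists]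

lemma boolLists_succ_succ (L c : ℕ) : boolLists (L + 1) (c + 1) =
    List.cons true '' boolLists L c ∪ List.cons false '' boolLists L (c + 1) := by
  ext (_ | ⟨b, bs⟩)
  · simp [boolLists]
  · cases b <;> simp [boolLists]

lemma card_boolLists (L c : ℕ) : Nat.card (boolLists L c) = L.choose c := by
  induction L generalizing c with
  | zero => cases c <;> simp [boolLists_zero_right, boolLists_zero_succ]
  | succ L ih =>
    cases c with
    | zero => simp [boolLists_zero_right]
    | succ c =>
      rw [Nat.card_coe_set_eq, boolLists_succ_succ,
        Set.ncard_union_eq (Set.disjoint_left.2 (by simp))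
          ((finite_boolLists L c).image _) ((finite_boolLists L (c + 1)).image _),
        Set.ncard_image_of_injective _ List.cons_injective,
        Set.ncard_image_of_injective _ List.cons_injective,
        ← Nat.card_coe_set_eq, ← Nat.card_coe_set_eq, ih, ih, Nat.choose_succ_succ]

def packedWords (P : ℕ → Prop) (L : ℕ) : Set (List ℕ) :=
  {w | w.length = L ∧ IsPacked w ∧ ∀ a ∈ w, P (w.count a)}

lemma packedWords_zero (P : ℕ → Prop) : packedWords P 0 = {[]} := by
  ext w
  simp +contextual [packedWords, IsPacked]

lemma finite_packedWords (P : ℕ → Prop) (L : ℕ) : (packedWords P L).Finite := by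
  refine ((List.finite_length_eq (Fin L) L).image (List.map Fin.val)).subset ?_
  rintro w ⟨hL, hw, -⟩
  refine ⟨w.pmap Fin.mk fun a ha => hL ▸ hw.lt_length ha, by simpa using hL, ?_⟩
  simp [List.map_pmap]

instance (P : ℕ → Prop) (L : ℕ) : Finite (packedWords P L) :=
  (finite_packedWords P L).to_subtype

section ZeroSplit

variable {P : ℕ → Prop} {L c : ℕ}

lemma stripZeros_mem_packedWords {w : List ℕ} (hw : w ∈ packedWords P L) :
    stripZeros w ∈ packedWords P (L - w.count 0) := by
  obtain ⟨hL, hpacked, hP⟩ := hw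
  refine ⟨?_, hpacked.stripZeros, fun b hb => ?_⟩
  · rw [length_stripZeros, ← hL, ← length_zeroMask, ← count_true_zeroMask,
      ← List.count_false_add_count_true, Nat.add_sub_cancel]
  · rw [count_stripZeros]
    exact hP _ (mem_stripZeros.1 hb)

lemma fillZeros_mem_packedWords (hc : 0 < c) (hPc : P c) {bs : List Bool} {l : List ℕ}
    (hbs : bs ∈ boolLists L c) (hl : l ∈ packedWords P (L - c)) :
    fillZeros bs l ∈ packedWords P L := by
  obtain ⟨hlL, hlpacked, hlP⟩ := hl
  have hstrip := stripZeros_fillZeros (hlL.trans (count_false_of_mem_boolLists hbs).symm)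
  have hcount : (fillZeros bs l).count 0 = c := (count_zero_fillZeros bs l).trans hbs.2
  have h0 : 0 ∈ fillZeros bs l := List.count_pos_iff.1 (hcount ▸ hc)
  refine ⟨(length_fillZeros bs l).trans hbs.1, .of_stripZeros h0 (by rwa [hstrip]), ?_⟩
  rintro (_ | b) hb
  · rwa [hcount]
  · rw [← count_stripZeros, hstrip]
    exact hlP _ (hstrip ▸ mem_stripZeros.2 hb)

def zeroSplitEquiv (hc : 0 < c) (hPc : P c) :
    {w : packedWords P L // w.1.count 0 = c} ≃ boolLists L c × packedWords P (L - c) where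
  toFun w :=
    (⟨zeroMask w, (length_zeroMask w).trans w.1.2.1, (count_true_zeroMask w).trans w.2⟩,
      ⟨stripZeros w, by simpa [w.2] using stripZeros_mem_packedWords w.1.2⟩)
  invFun p := ⟨⟨fillZeros p.1 p.2, fillZeros_mem_packedWords hc hPc p.1.2 p.2.2⟩,
    (count_zero_fillZeros _ _).trans p.1.2.2⟩
  left_inv w := Subtype.ext (Subtype.ext (fillZeros_zeroMask_stripZeros w))
  right_inv := fun ⟨⟨bs, hbs⟩, ⟨l, hl⟩⟩ =>
    Prod.ext (Subtype.ext (zeroMask_fillZeros bs l))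
      (Subtype.ext (stripZeros_fillZeros (hl.1.trans (count_false_of_mem_boolLists hbs).symm)))

end ZeroSplit

theorem card_packedWords (P : ℕ → Prop) [DecidablePred P] {L : ℕ} (hL : 0 < L) :
    Nat.card (packedWords P L) =
      ∑ c ∈ (Finset.Icc 1 L).filter P, L.choose c * Nat.card (packedWords P (L - c)) := by
  have hcount (w : packedWords P L) : w.1.count 0 ∈ (Finset.Icc 1 L).filter P := by
    obtain ⟨w, hwL, hw, hP⟩ := w
    have h0 : 0 ∈ w := hw.zero_mem (List.ne_nil_of_length_pos (by omega))
    exact Finset.mem_filter.2 ⟨Finset.mem_Icc.2 ⟨List.count_pos_iff.2 h0,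
      List.count_le_length.trans_eq hwL⟩, hP 0 h0⟩
  calc Nat.card (packedWords P L)
      = Nat.card (Σ c : (Finset.Icc 1 L).filter P, {w : packedWords P L // w.1.count 0 = c}) :=
        Nat.card_congr
          (Equiv.sigmaSubtypeFiberEquiv (fun w : packedWords P L => w.1.count 0) _ hcount).symm
    _ = ∑ c : (Finset.Icc 1 L).filter P, L.choose c * Nat.card (packedWords P (L - c)) := by
        rw [Nat.card_sigma]
        refine Finset.sum_congr rfl fun c _ => ?_
        obtain ⟨hc, hPc⟩ := Finset.mem_filter.1 c.2
        rw [Nat.card_congr (zeroSplitEquiv (Finset.mem_Icc.1 hc).1 hPc), Nat.card_prod,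
          card_boolLists]
    _ = _ := Finset.sum_coe_sort _ fun c => L.choose c * Nat.card (packedWords P (L - c))

lemma filter_dvd_Icc_one_mul {m : ℕ} (hm : 0 < m) (n : ℕ) :
    (Finset.Icc 1 (m * n)).filter (m ∣ ·) =
      (Finset.Icc 1 n).map ⟨(m * ·), mul_right_injective₀ hm.ne'⟩ := by
  ext c
  simp only [Finset.mem_filter, Finset.mem_Icc, Finset.mem_map, Function.Embedding.coeFn_mk]
  constructor
  · rintro ⟨⟨hc1, hcn⟩, k, rfl⟩
    exact ⟨k, ⟨Nat.pos_of_mul_pos_left hc1, Nat.le_of_mul_le_mul_left hcn hm⟩, rfl⟩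
  · rintro ⟨k, ⟨hk1, hkn⟩, rfl⟩
    exact ⟨⟨Nat.mul_pos hm hk1, Nat.mul_le_mul_left m hkn⟩, dvd_mul_right m k⟩

lemma mPackedCount_eq_card (m n : ℕ) :
    mPackedCount m n = Nat.card (packedWords (m ∣ ·) (m * n)) := rfl

lemma mPackedCount_zero (m : ℕ) : mPackedCount m 0 = 1 := by
  rw [mPackedCount_eq_card, Nat.mul_zero, packedWords_zero, Nat.card_unique]

lemma mPackedCount_eq_sum {m n : ℕ} (hm : 0 < m) (hn : 0 < n) :
    mPackedCount m n =
      ∑ k ∈ Finset.Icc 1 n, (m * n).choose (m * k) * mPackedCount m (n - k) := by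
  rw [mPackedCount_eq_card, card_packedWords _ (Nat.mul_pos hm hn), filter_dvd_Icc_one_mul hm,
    Finset.sum_map]
  refine Finset.sum_congr rfl fun k _ => ?_
  rw [mPackedCount_eq_card, Function.Embedding.coeFn_mk, Nat.mul_sub]

theorem PowerSeries.mk_mul_one_sub_mk_eq_one {R : Type*} [CommRing R] {a b : ℕ → R}
    (ha : a 0 = 1) (hb : b 0 = 0)
    (hrec : ∀ n, 0 < n → a n = ∑ k ∈ Finset.Icc 1 n, b k * a (n - k)) :
    mk a * (1 - mk b) = 1 := by
  ext n
  rw [mul_sub, mul_one, mul_comm, map_sub, coeff_mul, coeff_mk, coeff_one,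
    Finset.Nat.sum_antidiagonal_eq_sum_range_succ (fun i j => coeff i (mk b) * coeff j (mk a))]
  rcases n with _ | n
  · simp [ha, hb]
  · rw [hrec _ n.succ_pos, Finset.sum_range_succ', ← Finset.Ico_add_one_right_eq_Icc,
      Finset.sum_Ico_eq_sum_range]
    simp [hb, add_comm]

open PowerSeries in
/-- The exponential generating function of the numbers `a_n(m)` of
`m`-packed words of degree `n` satisfies
`∑_{n≥0} a_n(m) tⁿ/(mn)! = (1 − ∑_{n≥1} tⁿ/(mn)!)⁻¹`. -/
theorem mPackedWords_egf (m : ℕ) (hm : 1 ≤ m) :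
    (PowerSeries.mk fun n => (mPackedCount m n : ℚ) / (Nat.factorial (m * n) : ℚ)) *
      (1 - PowerSeries.mk fun n =>
        if n = 0 then 0 else (1 : ℚ) / (Nat.factorial (m * n) : ℚ)) = 1 := by
  refine PowerSeries.mk_mul_one_sub_mk_eq_one (by simp [mPackedCount_zero]) (by simp)
    fun n hn => ?_
  rw [mPackedCount_eq_sum hm hn, Nat.cast_sum, Finset.sum_div]
  refine Finset.sum_congr rfl fun k hk => ?_
  obtain ⟨hk1, hkn⟩ := Finset.mem_Icc.1 hk
  rw [if_neg (by omega), Nat.cast_mul, Nat.cast_choose ℚ (Nat.mul_le_mul_left m hkn),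
    ← Nat.mul_sub]
  field_simp
end

section
/- The number of nondecreasing m-parking functions of length n is the Fuss-Catalan number (1/(mn+1)) binomial((m+1)n, n). -/
/-!
Write `N = (m + 1) * n + 1`. The word `a` is sent to the `n`-subset `{a i + i - 1}` of `Fin N`
(`i` counted from `0`). Reading a subset `s` of `Fin N` as the lattice walk with a step `m` at the
elements of `s` and a step `-1` elsewhere, the bound `a i ≤ m * i + 1` says exactly that the walk
stays nonnegative before time `N` (a ballot condition). An `n`-subset gives a walk of total
displacement `-1`, and for such walks the cycle lemma says that exactly one of the `N` cyclic
rotations is a ballot walk. Hence `N` times the number of ballot subsets is `choose N n`, and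
`choose N n = N / (m * n + 1) * choose ((m + 1) * n) n`.
-/

open Finset Function
open scoped Pointwise

-- The cycle lemma of Dvoretzky and Motzkin.
section CycleLemma

variable {N : ℕ} {S : ℕ → ℤ}

theorem exists_lt_forall_le_add (hN : 0 < N) (hS : ∀ k, S (k + N) = S k - 1) :
    ∃ r < N, ∀ k < N, S r ≤ S (r + k) := by
  classical
  have hmin : ∃ r, r < N ∧ ∀ j < N, S r ≤ S j := by
    obtain ⟨r, hr, h⟩ := exists_min_image (range N) S ⟨0, mem_range.2 hN⟩
    exact ⟨r, mem_range.1 hr, fun j hj => h j (mem_range.2 hj)⟩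
  -- Start at the first minimum of `S` on `[0, N)`: it lies strictly below every earlier value,
  -- which takes care of the indices wrapping around past `N`.
  obtain ⟨hr, hle⟩ := Nat.find_spec hmin
  have hlt : ∀ j < Nat.find hmin, S (Nat.find hmin) < S j := fun j hj => by
    by_contra! h
    exact Nat.find_min hmin hj ⟨hj.trans hr, fun i hi => h.trans (hle i hi)⟩
  refine ⟨Nat.find hmin, hr, fun k hk => ?_⟩
  rcases lt_or_ge (Nat.find hmin + k) N with h | h
  · exact hle _ h
  · obtain ⟨j, hj⟩ : ∃ j, Nat.find hmin + k = j + N := ⟨_, (Nat.sub_add_cancel h).symm⟩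
    rw [hj, hS]
    exact Int.le_sub_one_of_lt (hlt j (by omega))

theorem eq_of_forall_le_add (hS : ∀ k, S (k + N) = S k - 1) {r r' : ℕ} (hr : r < N)
    (hr' : r' < N) (h : ∀ k < N, S r ≤ S (r + k)) (h' : ∀ k < N, S r' ≤ S (r' + k)) :
    r = r' := by
  wlog hlt : r < r' generalizing r r'
  · rcases (not_lt.1 hlt).lt_or_eq with hlt | heq
    · exact (this hr' hr h' h hlt).symm
    · exact heq.symm
  have h₁ := h (r' - r) (by omega)
  have h₂ := h' (N - (r' - r)) (by omega)
  rw [show r + (r' - r) = r' by omega] at h₁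
  rw [show r' + (N - (r' - r)) = r + N by omega, hS] at h₂
  omega

end CycleLemma

namespace Fin

variable {n : ℕ} {t : Fin n → ℕ}

lemma strictMono_apply_add_sub_le (ht : StrictMono t) {i j : Fin n} (hij : i ≤ j) :
    t i + ((j : ℕ) - i) ≤ t j := by
  have := card_le_card_of_injOn t (s := Ioc i j) (t := Ioc (t i) (t j))
    (fun k hk => by
      simp only [coe_Ioc, Set.mem_Ioc] at hk ⊢
      exact ⟨ht hk.1, ht.monotone hk.2⟩)
    ht.injective.injOn
  rw [Fin.card_Ioc, Nat.card_Ioc] at this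
  have := ht.monotone hij
  omega

lemma le_strictMono_apply (ht : StrictMono t) (i : Fin n) : (i : ℕ) ≤ t i :=
  le_of_add_le_right (strictMono_apply_add_sub_le ht (i := ⟨0, i.pos⟩) (Nat.zero_le i))

lemma card_filter_lt_apply (ht : StrictMono t) (i : Fin n) : #{j | t j < t i} = i := by
  rw [show ({j | t j < t i} : Finset (Fin n)) = Iio i by ext; simp [ht.lt_iff_lt], Fin.card_Iio]

lemma le_apply_card_filter_lt (ht : Monotone t) (k : ℕ) (h : #{j | t j < k} < n) :
    k ≤ t ⟨#{j | t j < k}, h⟩ := by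
  by_contra! hlt
  have hsub : Iic ⟨_, h⟩ ⊆ ({j | t j < k} : Finset (Fin n)) := fun j hj =>
    mem_filter.2 ⟨mem_univ j, (ht (mem_Iic.1 hj)).trans_lt hlt⟩
  simpa using card_le_card hsub

theorem forall_le_mul_card_filter_lt_iff {a : ℕ} (ht : StrictMono t)
    (hbound : ∀ i, t i ≤ a * n) :
    (∀ k ≤ a * n, k ≤ a * #{i | t i < k}) ↔ ∀ i, t i ≤ a * i := by
  constructor
  · intro h i
    simpa [card_filter_lt_apply ht] using h (t i) (hbound i)
  · intro h k hk
    rcases lt_or_ge #{i | t i < k} n with hc | hc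
    · exact (le_apply_card_filter_lt ht.monotone k hc).trans (h _)
    · exact hk.trans (Nat.mul_le_mul_left a hc)

end Fin

def listSubtypeEquivFinFun {α : Type*} (n : ℕ) (Q : List α → Prop) :
    {w : List α // w.length = n ∧ Q w} ≃ {f : Fin n → α // Q (List.ofFn f)} :=
  (Equiv.subtypeSubtypeEquivSubtypeInter (fun w : List α => w.length = n) Q).symm.trans
    (Equiv.subtypeEquiv (Equiv.vectorEquivFin α n : {w : List α // w.length = n} ≃ _)
      fun v => by
        rw [← List.Vector.toList_ofFn]
        exact Iff.of_eq (congrArg (fun v : List.Vector α n => Q v.toList)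
          (List.Vector.ofFn_get v).symm))

theorem Nat.choose_div_eq_of_mul_eq {m n c : ℕ}
    (h : c * ((m + 1) * n + 1) = ((m + 1) * n + 1).choose n) :
    ((m + 1) * n).choose n / (m * n + 1) = c := by
  have key := Nat.choose_mul_succ_eq ((m + 1) * n) n
  rw [← h, show (m + 1) * n + 1 - n = m * n + 1 by rw [add_one_mul]; omega] at key
  rw [Nat.eq_of_mul_eq_mul_right (Nat.succ_pos _) (key.trans (mul_right_comm ..)),
    Nat.mul_div_cancel _ (Nat.succ_pos _)]

namespace FussCatalan

section Ballot

variable {N : ℕ} [NeZero N] (m : ℕ)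

def weight (s : Finset (Fin N)) (j : ℕ) : ℤ := if Fin.ofNat N j ∈ s then (m : ℤ) else -1

def IsBallot (s : Finset (Fin N)) : Prop := ∀ k < N, 0 ≤ ∑ j ∈ range k, weight m s j

variable {m}

lemma weight_add_period (s : Finset (Fin N)) (j : ℕ) : weight m s (j + N) = weight m s j := by
  simp [weight, Fin.ofNat, Nat.add_mod_right]

lemma weight_neg_vadd (s : Finset (Fin N)) (r : Fin N) (j : ℕ) :
    weight m (-r +ᵥ s) j = weight m s (r + j) := by
  have : r +ᵥ Fin.ofNat N j = Fin.ofNat N (r + j) := by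
    ext; simp [Fin.val_add, Nat.add_mod]
  simp only [weight, mem_neg_vadd_finset_iff, this]

lemma sum_range_weight (s : Finset (Fin N)) (k : ℕ) :
    ∑ j ∈ range k, weight m s j = (m + 1) * #{j ∈ range k | Fin.ofNat N j ∈ s} - k := by
  have : ∀ j, weight m s j = (m + 1) * (if Fin.ofNat N j ∈ s then 1 else 0) - 1 := fun j => by
    unfold weight; split_ifs <;> ring
  simp only [this, sum_sub_distrib, ← mul_sum, sum_boole, sum_const, card_range, nsmul_eq_mul,
    mul_one]

lemma card_filter_ofNat_mem_range (s : Finset (Fin N)) {k : ℕ} (hk : k ≤ N) :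
    #{j ∈ range k | Fin.ofNat N j ∈ s} = #{a ∈ s | a.val < k} := by
  have hval : ∀ j < k, (Fin.ofNat N j : ℕ) = j := fun j hj => Nat.mod_eq_of_lt (hj.trans_le hk)
  refine card_nbij' (Fin.ofNat N) Fin.val (fun j hj => ?_) (fun a ha => ?_) (fun j hj => ?_)
    (fun a _ => Fin.ofNat_val_eq_self a)
  · simp only [mem_coe, mem_filter, mem_range] at hj ⊢
    exact ⟨hj.2, (hval j hj.1).symm ▸ hj.1⟩
  · simp only [mem_coe, mem_filter, mem_range] at ha ⊢
    exact ⟨ha.2, by rw [Fin.ofNat_val_eq_self]; exact ha.1⟩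
  · exact hval j (mem_range.1 (mem_filter.1 (mem_coe.1 hj)).1)

lemma isBallot_neg_vadd_iff (s : Finset (Fin N)) (r : Fin N) :
    IsBallot m (-r +ᵥ s) ↔
      ∀ k < N, ∑ j ∈ range r, weight m s j ≤ ∑ j ∈ range (r + k), weight m s j := by
  simp only [IsBallot, weight_neg_vadd, sum_range_add, le_add_iff_nonneg_right]

variable {n : ℕ}

lemma sum_range_weight_add_period {s : Finset (Fin N)} (hs : #s = n)
    (hN : (m + 1) * n + 1 = N) (k : ℕ) :
    ∑ j ∈ range (k + N), weight m s j = ∑ j ∈ range k, weight m s j - 1 := by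
  have hN' : (N : ℤ) = (m + 1) * n + 1 := by exact_mod_cast hN.symm
  rw [add_comm, sum_range_add, sum_range_weight, card_filter_ofNat_mem_range s le_rfl,
    filter_true_of_mem fun a _ => a.isLt, hs]
  simp only [add_comm N, weight_add_period]
  linear_combination -hN'

lemma exists_isBallot_neg_vadd {s : Finset (Fin N)} (hs : #s = n)
    (hN : (m + 1) * n + 1 = N) : ∃ r : Fin N, IsBallot m (-r +ᵥ s) := by
  obtain ⟨r, hr, h⟩ := exists_lt_forall_le_add (S := fun k => ∑ j ∈ range k, weight m s j)
    (NeZero.pos N) (sum_range_weight_add_period hs hN)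
  exact ⟨⟨r, hr⟩, (isBallot_neg_vadd_iff s _).2 h⟩

lemma eq_of_isBallot_neg_vadd {s : Finset (Fin N)} (hs : #s = n) (hN : (m + 1) * n + 1 = N)
    {r r' : Fin N} (h : IsBallot m (-r +ᵥ s)) (h' : IsBallot m (-r' +ᵥ s)) : r = r' :=
  Fin.ext <| eq_of_forall_le_add (S := fun k => ∑ j ∈ range k, weight m s j)
    (sum_range_weight_add_period hs hN) r.isLt r'.isLt
    ((isBallot_neg_vadd_iff s r).1 h) ((isBallot_neg_vadd_iff s r').1 h')

theorem card_isBallot_mul (hN : (m + 1) * n + 1 = N) :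
    Nat.card {s : Finset (Fin N) // #s = n ∧ IsBallot m s} * N = N.choose n := by
  let rotate (p : {s : Finset (Fin N) // #s = n ∧ IsBallot m s} × Fin N) :
      {s : Finset (Fin N) // #s = n} :=
    ⟨p.2 +ᵥ p.1.1, (card_vadd_finset _ _).trans p.1.2.1⟩
  have hbij : Bijective rotate := by
    constructor
    · rintro ⟨⟨g, hg, _⟩, r⟩ ⟨⟨g', _, _⟩, r'⟩ hrot
      have he : r +ᵥ g = r' +ᵥ g' := congrArg Subtype.val hrot
      have hs : #(r +ᵥ g) = n := (card_vadd_finset _ _).trans hg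
      obtain rfl : r = r' := eq_of_isBallot_neg_vadd hs hN (by rwa [neg_vadd_vadd])
        (by rwa [he, neg_vadd_vadd])
      obtain rfl : g = g' := (vadd_left_cancel_iff r).1 he
      rfl
    · rintro ⟨s, hs⟩
      obtain ⟨r, hr⟩ := exists_isBallot_neg_vadd hs hN
      exact ⟨(⟨-r +ᵥ s, (card_vadd_finset _ _).trans hs, hr⟩, r),
        Subtype.ext (vadd_neg_vadd r s)⟩
  calc _ = Nat.card ({s : Finset (Fin N) // #s = n ∧ IsBallot m s} × Fin N) := by
        rw [Nat.card_prod, Nat.card_fin]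
    _ = Nat.card {s : Finset (Fin N) // #s = n} := Nat.card_eq_of_bijective rotate hbij
    _ = N.choose n := by
        rw [Nat.card_eq_fintype_card, Fintype.card_finset_len, Fintype.card_fin]

end Ballot

variable {N m n : ℕ}

lemma card_filter_val_lt_eq {s : Finset (Fin N)} (hs : #s = n) (k : ℕ) :
    #{a ∈ s | a.val < k} = #{i | (s.orderEmbOfFin hs i : ℕ) < k} := by
  conv_lhs => rw [← map_orderEmbOfFin_univ s hs, filter_map, card_map]
  rfl

theorem isBallot_iff_forall_orderEmbOfFin_le [NeZero N] {s : Finset (Fin N)} (hs : #s = n)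
    (hN : (m + 1) * n + 1 = N) :
    IsBallot m s ↔ ∀ i, (s.orderEmbOfFin hs i : ℕ) ≤ (m + 1) * i := by
  subst hN
  rw [← Fin.forall_le_mul_card_filter_lt_iff (t := fun i => (s.orderEmbOfFin hs i : ℕ))
    (Fin.val_strictMono.comp (s.orderEmbOfFin hs).strictMono)
    (fun i => Nat.lt_succ_iff.1 (s.orderEmbOfFin hs i).isLt)]
  simp only [IsBallot, Nat.lt_succ_iff]
  refine forall₂_congr fun k hk => ?_
  rw [sum_range_weight, card_filter_ofNat_mem_range s (Nat.le_succ_of_le hk),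
    card_filter_val_lt_eq hs, sub_nonneg]
  norm_cast

def orderEmbEquivIsBallot [NeZero N] (hN : (m + 1) * n + 1 = N) :
    {t : Fin n ↪o Fin N // ∀ i, (t i : ℕ) ≤ (m + 1) * i} ≃
      {s : Finset (Fin N) // #s = n ∧ IsBallot m s} :=
  ((Set.powersetCard.ofFinEmbEquiv.symm.subtypeEquiv
    (q := fun t : Fin n ↪o Fin N => ∀ i, (t i : ℕ) ≤ (m + 1) * i) fun s =>
      isBallot_iff_forall_orderEmbOfFin_le s.2 hN).symm.trans
    (Equiv.subtypeSubtypeEquivSubtypeInter (· ∈ Set.powersetCard (Fin N) n) (IsBallot m)) :)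

def monotoneEquivOrderEmb (hN : (m + 1) * n + 1 = N) :
    {f : Fin n → ℕ // Monotone f ∧ (∀ i, 1 ≤ f i) ∧ ∀ i : Fin n, f i ≤ m * i + 1} ≃
      {t : Fin n ↪o Fin N // ∀ i, (t i : ℕ) ≤ (m + 1) * i} where
  toFun f :=
    have hle (i : Fin n) : f.1 i + i - 1 ≤ (m + 1) * i := by
      have := f.2.2.2 i
      rw [add_one_mul]
      omega
    ⟨OrderEmbedding.ofStrictMono (fun i => ⟨f.1 i + i - 1, by
        have := Nat.mul_le_mul_left (m + 1) i.isLt.le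
        have := hle i
        omega⟩) fun i j hij => by
        have := f.2.1 hij.le
        have := f.2.2.1 i
        simp only [← Fin.val_fin_lt] at hij ⊢
        omega, hle⟩
  invFun t :=
    have ht : StrictMono fun i => (t.1 i : ℕ) := Fin.val_strictMono.comp t.1.strictMono
    ⟨fun i => t.1 i + 1 - i, fun i j hij => by
        have := Fin.strictMono_apply_add_sub_le ht hij
        have := Fin.le_strictMono_apply ht i
        simp only [Fin.le_def] at hij
        dsimp only
        omega,
      fun i => by have := Fin.le_strictMono_apply ht i; dsimp only; omega,
      fun i => by have := t.2 i; rw [add_one_mul] at this; dsimp only; omega⟩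
  left_inv f := by
    ext i
    have := f.2.2.1 i
    change f.1 i + i - 1 + 1 - i = f.1 i
    omega
  right_inv t := by
    ext i
    have : (i : ℕ) ≤ t.1 i :=
      Fin.le_strictMono_apply (Fin.val_strictMono.comp t.1.strictMono) i
    change (t.1 i : ℕ) + 1 - i + i - 1 = t.1 i
    omega

lemma ofFn_mParking_iff (f : Fin n → ℕ) :
    ((List.ofFn f).Pairwise (· ≤ ·) ∧ (∀ a ∈ List.ofFn f, 1 ≤ a) ∧
        ∀ i (h : i < (List.ofFn f).length), (List.ofFn f).get ⟨i, h⟩ ≤ m * i + 1) ↔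
      Monotone f ∧ (∀ i, 1 ≤ f i) ∧ ∀ i : Fin n, f i ≤ m * i + 1 := by
  rw [List.pairwise_ofFn, List.forall_mem_ofFn_iff, monotone_iff_forall_lt]
  simp [Fin.forall_iff]

end FussCatalan

open FussCatalan in
theorem card_nondecreasing_mParkingFunctions_general (m n : ℕ) :
    Nat.card {w : List ℕ //
        w.length = n ∧ w.Pairwise (· ≤ ·) ∧ (∀ a ∈ w, 1 ≤ a) ∧
        ∀ i (h : i < w.length), w.get ⟨i, h⟩ ≤ m * i + 1} =
      Nat.choose ((m + 1) * n) n / (m * n + 1) := by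
  have hN : (m + 1) * n + 1 = (m + 1) * n + 1 := rfl
  rw [Nat.card_congr <| (listSubtypeEquivFinFun n _).trans <|
    (Equiv.subtypeEquivRight ofFn_mParking_iff).trans <|
      (monotoneEquivOrderEmb hN).trans (orderEmbEquivIsBallot hN)]
  exact (Nat.choose_div_eq_of_mul_eq (card_isBallot_mul hN)).symm

/-- The number of nondecreasing `m`-parking functions of length `n`
(nondecreasing words `a₁ ≤ ⋯ ≤ a_n` of positive integers with `a_i ≤ m(i−1)+1`)
is the Fuss–Catalan number `(1/(mn+1))·C((m+1)n, n)`. -/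
theorem card_nondecreasing_mParkingFunctions (m n : ℕ) (hm : 1 ≤ m) :
    Nat.card {w : List ℕ //
        w.length = n ∧ w.Pairwise (· ≤ ·) ∧ (∀ a ∈ w, 1 ≤ a) ∧
        ∀ i (h : i < w.length), w.get ⟨i, h⟩ ≤ m * i + 1} =
      Nat.choose ((m + 1) * n) n / (m * n + 1) :=
  card_nondecreasing_mParkingFunctions_general m n
end

section
/- The map sending a nondecreasing m-parking function (a_1,...,a_n) to the word obtained by repeating each letter m times is a bijection from nondecreasing m-parking functions of length n onto ordinary nondecreasing parking functions of length mn whose evaluation is a multiple of m (each value appears a number of times divisible by m). -/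
/-!
Repeating letters scales positions by `m`: position `j` of the repeated word carries the
letter at position `j / m` (0-indexed), so the bound `a_i ≤ m i + 1` is exactly `b_j ≤ j + 1`
at the first copy `j = m i` and weaker at the others. Conversely, a nondecreasing word is
determined by its multiset, so one whose multiplicities are all divisible by `m` is the
repetition of the sorted word with multiplicities divided by `m`.
-/

namespace List

variable {α : Type*} {m : ℕ}

theorem length_flatMap_replicate (m : ℕ) (l : List α) :
    (l.flatMap (replicate m)).length = m * l.length := by
  simp [length_flatMap, mul_comm]

theorem count_flatMap_replicate [BEq α] [LawfulBEq α] (m : ℕ) (l : List α) (a : α) :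
    (l.flatMap (replicate m)).count a = m * l.count a := by
  induction l with
  | nil => simp
  | cons b l ih => by_cases h : b = a <;> simp [count_replicate, ih, h, mul_add, add_comm]

theorem getElem_flatMap_replicate (l : List α) (i : ℕ)
    (hi : i < (l.flatMap (replicate m)).length) :
    (l.flatMap (replicate m))[i] = l[i / m]'(by
      rw [length_flatMap_replicate] at hi
      exact Nat.div_lt_of_lt_mul hi) := by
  induction l generalizing i with
  | nil => simp at hi
  | cons b l ih =>
    simp only [flatMap_cons]
    by_cases him : i < m
    · rw [getElem_append_left (by simpa using him)]
      simp [Nat.div_eq_of_lt him]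
    · have hm : 0 < m := Nat.pos_of_ne_zero (by rintro rfl; simp at hi)
      rw [getElem_append_right (by simpa using him)]
      simp only [length_replicate, ih]
      simp [Nat.div_eq_sub_div hm (not_lt.1 him)]

theorem getElem_flatMap_replicate_mul (hm : m ≠ 0) (l : List α) (i : ℕ) (hi : i < l.length) :
    (l.flatMap (replicate m))[m * i]'(by
      rw [length_flatMap_replicate]; exact Nat.mul_lt_mul_of_pos_left hi (Nat.pos_of_ne_zero hm)) =
      l[i] := by
  simp only [getElem_flatMap_replicate, Nat.mul_div_cancel_left i (Nat.pos_of_ne_zero hm)]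

theorem flatMap_replicate_injective (hm : m ≠ 0) :
    Function.Injective (flatMap (α := α) (replicate m)) := by
  intro s t hst
  have hlen : s.length = t.length := by
    simpa [length_flatMap_replicate, hm] using congrArg length hst
  refine ext_getElem hlen fun i hs ht => ?_
  rw [← getElem_flatMap_replicate_mul hm s i hs, ← getElem_flatMap_replicate_mul hm t i ht]
  simp only [hst]

theorem mem_flatMap_replicate (hm : m ≠ 0) {l : List α} {a : α} :
    a ∈ l.flatMap (replicate m) ↔ a ∈ l := by
  simp [hm]

theorem Pairwise.flatMap_replicate {R : α → α → Prop} [Std.Refl R] {l : List α}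
    (hl : l.Pairwise R) : (l.flatMap (replicate m)).Pairwise R :=
  pairwise_flatMap.2 ⟨fun _ _ => pairwise_replicate_of_refl,
    hl.imp fun hab _ hx _ hy => (eq_of_mem_replicate hx) ▸ (eq_of_mem_replicate hy) ▸ hab⟩

theorem exists_flatMap_replicate_eq [LinearOrder α] {v : List α}
    (hv : v.Pairwise (· ≤ ·)) (hdvd : ∀ a ∈ v, m ∣ v.count a) :
    ∃ w : List α, w.Pairwise (· ≤ ·) ∧ w.flatMap (replicate m) = v := by
  let N : Multiset α := ∑ a ∈ v.toFinset, Multiset.replicate (v.count a / m) a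
  have hN : ∀ a, m * N.count a = v.count a := by
    intro a
    simp only [N, Multiset.count_sum', Multiset.count_replicate]
    by_cases ha : a ∈ v
    · simp [ha, Nat.mul_div_cancel' (hdvd a ha)]
    · simp [ha, count_eq_zero_of_not_mem]
  refine ⟨N.sort, Multiset.pairwise_sort _ _, ?_⟩
  refine Perm.eq_of_pairwise' (Multiset.pairwise_sort N _).flatMap_replicate hv
    (perm_iff_count.2 fun a => ?_)
  rw [count_flatMap_replicate, ← Multiset.coe_count, Multiset.sort_eq, hN]

end List

open List in
/-- Repeating each letter `m` times is a bijection from nondecreasing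
`m`-parking functions of length `n` onto ordinary nondecreasing parking functions of
length `mn` whose evaluation is a multiple of `m` (each value occurs a number of times
divisible by `m`). -/
theorem repeat_bijOn_nondecreasing_mParking (m n : ℕ) (hm : 1 ≤ m) :
    Set.BijOn (fun w : List ℕ => w.flatMap fun a => List.replicate m a)
      {w : List ℕ |
        w.length = n ∧ w.Pairwise (· ≤ ·) ∧ (∀ a ∈ w, 1 ≤ a) ∧
        ∀ i (h : i < w.length), w.get ⟨i, h⟩ ≤ m * i + 1}
      {v : List ℕ |
        v.length = m * n ∧ v.Pairwise (· ≤ ·) ∧ (∀ a ∈ v, 1 ≤ a) ∧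
        (∀ i (h : i < v.length), v.get ⟨i, h⟩ ≤ i + 1) ∧
        ∀ a ∈ v, m ∣ v.count a} := by
  have hm0 : m ≠ 0 := by omega
  refine ⟨?_, fun s _ t _ hst => flatMap_replicate_injective hm0 hst, ?_⟩
  · rintro w ⟨hlen, hw, hpos, hpark⟩
    refine ⟨by rw [length_flatMap_replicate, hlen], hw.flatMap_replicate,
      fun a ha => hpos a ((mem_flatMap_replicate hm0).1 ha), fun j hj => ?_,
      fun a _ => ⟨_, count_flatMap_replicate m w a⟩⟩
    have hjm : j / m < w.length :=
      Nat.div_lt_of_lt_mul (by simpa [length_flatMap_replicate, hlen, mul_comm] using hj)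
    simp only [get_eq_getElem, getElem_flatMap_replicate]
    calc w[j / m] ≤ m * (j / m) + 1 := hpark _ _
      _ ≤ j + 1 := by have := Nat.mul_div_le j m; omega
  · rintro v ⟨hlen, hv, hpos, hpark, hdvd⟩
    obtain ⟨w, hw, rfl⟩ := exists_flatMap_replicate_eq hv hdvd
    refine ⟨w, ⟨?_, hw, fun a ha => hpos a ((mem_flatMap_replicate hm0).2 ha),
      fun i hi => ?_⟩, rfl⟩
    · rw [length_flatMap_replicate] at hlen
      exact Nat.eq_of_mul_eq_mul_left (Nat.pos_of_ne_zero hm0) hlen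
    · rw [get_eq_getElem, ← getElem_flatMap_replicate_mul hm0]
      exact hpark (m * i) _
end

section
/- The number of hypoplactic classes of m-packed words of degree n (length mn) is 3^{n−1} for n ≥ 1. -/
/-- The hypoplactic invariant of a word `w` (viewed as a tuple): its evaluation,
together with the descent relation of `std(w)⁻¹ = Tuple.sort w` (the recoils of the
standardization `std(w)`).  Two words are hypoplactically congruent iff they have the
same invariant. -/
def hypoplacticInvariant {N : ℕ} (w : Fin N → ℕ) :
    (ℕ → ℕ) × (Fin N → Fin N → Prop) :=
  ((fun a => (Finset.univ.filter (fun i => w i = a)).card),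
   fun i j => (j : ℕ) = (i : ℕ) + 1 ∧ Tuple.sort w j < Tuple.sort w i)

/-- An `m`-packed word of degree `n`, as a tuple: letters are positive, they form an
initial segment of `{1, 2, …}`, and every letter count is divisible by `m`. -/
def IsMPackedWord (m n : ℕ) (w : Fin (m * n) → ℕ) : Prop :=
  (∀ i, 1 ≤ w i) ∧
  (∀ k : ℕ, 1 ≤ k → (∃ i, w i = k + 1) → ∃ i, w i = k) ∧
  ∀ a : ℕ, m ∣ (Finset.univ.filter (fun i => w i = a)).card

namespace HypoCount

open Finset

/-! ### Gap-marker combinatorics -/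

def cutCnt {n : ℕ} (g : Fin (n-1) → Fin 3) : ℕ → ℕ
  | 0 => 0
  | t+1 => cutCnt g t + (if h : t < n - 1 then (if g ⟨t, h⟩ ≠ 0 then 1 else 0) else 0)

def oneCnt {n : ℕ} (g : Fin (n-1) → Fin 3) : ℕ → ℕ
  | 0 => 0
  | t+1 => oneCnt g t + (if h : t < n - 1 then (if g ⟨t, h⟩ = 1 then 1 else 0) else 0)

def LL {n : ℕ} (g : Fin (n-1) → Fin 3) (t : ℕ) : ℕ := 1 + cutCnt g t

lemma cutCnt_succ_le {n} (g : Fin (n-1) → Fin 3) (t : ℕ) :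
    cutCnt g (t+1) ≤ cutCnt g t + 1 := by
  simp only [cutCnt]
  split_ifs <;> omega

lemma cutCnt_mono {n} (g : Fin (n-1) → Fin 3) : Monotone (cutCnt g) := by
  apply monotone_nat_of_le_succ
  intro t
  simp only [cutCnt]
  split_ifs <;> omega

lemma LL_mono {n} (g : Fin (n-1) → Fin 3) : Monotone (LL g) := fun a b h =>
  Nat.add_le_add_left (cutCnt_mono g h) 1

lemma cutCnt_le {n} (g : Fin (n-1) → Fin 3) (t : ℕ) : cutCnt g t ≤ t := by
  induction t with
  | zero => simp [cutCnt]
  | succ t ih => have := cutCnt_succ_le g t; omega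

lemma LL_le {n} (g : Fin (n-1) → Fin 3) (t : ℕ) : LL g t ≤ t + 1 := by
  have := cutCnt_le g t; unfold LL; omega

lemma LL_zero {n} (g : Fin (n-1) → Fin 3) : LL g 0 = 1 := rfl

lemma one_le_LL {n} (g : Fin (n-1) → Fin 3) (t : ℕ) : 1 ≤ LL g t := Nat.le_add_right 1 _

lemma cutCnt_succ_eq {n} (g : Fin (n-1) → Fin 3) (s : Fin (n-1)) :
    cutCnt g ((s:ℕ)+1) = cutCnt g s + (if g s ≠ 0 then 1 else 0) := by
  simp only [cutCnt, dif_pos s.2, Fin.eta]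

lemma oneCnt_succ_eq {n} (g : Fin (n-1) → Fin 3) (s : Fin (n-1)) :
    oneCnt g ((s:ℕ)+1) = oneCnt g s + (if g s = 1 then 1 else 0) := by
  simp only [oneCnt, dif_pos s.2, Fin.eta]

lemma LL_succ_eq {n} (g : Fin (n-1) → Fin 3) (s : Fin (n-1)) :
    LL g ((s:ℕ)+1) = LL g s + (if g s ≠ 0 then 1 else 0) := by
  simp only [LL, cutCnt_succ_eq, Nat.add_assoc]

lemma oneCnt_succ_of_cut_eq {n} (g : Fin (n-1) → Fin 3) (t : ℕ)
    (h : cutCnt g (t+1) = cutCnt g t) : oneCnt g (t+1) = oneCnt g t := by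
  by_cases ht : t < n - 1
  · simp only [cutCnt, dif_pos ht] at h
    have hg : g ⟨t, ht⟩ = 0 := by by_contra hne; rw [if_pos hne] at h; omega
    simp only [oneCnt, dif_pos ht, hg]
    norm_num
  · simp only [oneCnt, dif_neg ht, add_zero]

lemma oneCnt_eq_of_LL_eq {n} (g : Fin (n-1) → Fin 3) {t u : ℕ} (htu : t ≤ u)
    (h : LL g t = LL g u) : oneCnt g t = oneCnt g u := by
  obtain ⟨d, rfl⟩ := Nat.exists_eq_add_of_le htu
  clear htu
  induction d with
  | zero => rfl
  | succ d ih =>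
    have e : t + (d+1) = t + d + 1 := by omega
    rw [e] at h
    have h1 : cutCnt g t = cutCnt g (t+d) := le_antisymm (cutCnt_mono g (by omega))
      (by have h2 := cutCnt_mono g (show t + d ≤ t + d + 1 by omega); unfold LL at h; omega)
    have h2 : cutCnt g (t+d+1) = cutCnt g (t+d) := by unfold LL at h; omega
    rw [e, oneCnt_succ_of_cut_eq g _ h2]
    exact ih (by unfold LL; omega)

/-! ### The block-sorting permutation -/

def keyF {n : ℕ} (g : Fin (n-1) → Fin 3) : Fin n → ℕ :=
  fun t => oneCnt g t * (n+1) + (n - LL g t)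

def tauP {n : ℕ} (g : Fin (n-1) → Fin 3) : Equiv.Perm (Fin n) := Tuple.sort (keyF g)

lemma tau_mono {n} (g : Fin (n-1) → Fin 3) : Monotone (keyF g ∘ tauP g) :=
  Tuple.monotone_sort _

lemma tau_stab {n} (g : Fin (n-1) → Fin 3) :
    ∀ i j, i < j → keyF g (tauP g i) = keyF g (tauP g j) → tauP g i < tauP g j :=
  (Tuple.eq_sort_iff.mp rfl).2

lemma symm_lt_of_key {n} (g : Fin (n-1) → Fin 3) {t u : Fin n}
    (h : keyF g t < keyF g u ∨ (keyF g t = keyF g u ∧ t < u)) :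
    (tauP g).symm t < (tauP g).symm u := by
  rcases lt_trichotomy ((tauP g).symm t) ((tauP g).symm u) with hlt | heq | hgt
  · exact hlt
  · exfalso
    have : t = u := by
      have := congrArg (tauP g) heq
      simpa using this
    subst this
    rcases h with h | h
    · exact lt_irrefl _ h
    · exact lt_irrefl _ h.2
  · exfalso
    have hle : keyF g ((tauP g) ((tauP g).symm u)) ≤ keyF g ((tauP g) ((tauP g).symm t)) :=
      tau_mono g hgt.le
    simp only [Equiv.apply_symm_apply] at hle
    rcases h with h | h
    · omega
    · have := tau_stab g _ _ hgt (by simp [h.1])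
      simp only [Equiv.apply_symm_apply] at this
      exact absurd h.2 (not_lt.mpr this.le)

lemma symm_lt_of_letter {n} (g : Fin (n-1) → Fin 3) {t u : Fin n}
    (hL : LL g (t:ℕ) = LL g (u:ℕ)) (htu : t < u) :
    (tauP g).symm t < (tauP g).symm u := by
  apply symm_lt_of_key g
  right
  refine ⟨?_, htu⟩
  unfold keyF
  rw [hL, oneCnt_eq_of_LL_eq g (le_of_lt htu) hL]

lemma fin3cases : ∀ x : Fin 3, x = 0 ∨ x = 1 ∨ x = 2 := by decide

lemma descent_iff {n} (g : Fin (n-1) → Fin 3) (s : Fin (n-1)) (h1 : (s:ℕ)+1 < n)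
    (hs : (s:ℕ) < n) :
    ((tauP g).symm ⟨(s:ℕ)+1, h1⟩ < (tauP g).symm ⟨(s:ℕ), hs⟩) ↔ g s = 2 := by
  have hLLle : LL g (s:ℕ) ≤ n - 1 := le_trans (LL_le g _) (by have := s.2; omega)
  have hLs := LL_succ_eq g s
  have hos := oneCnt_succ_eq g s
  rcases fin3cases (g s) with hgs | hgs | hgs
  · have hL2 : LL g ((s:ℕ)+1) = LL g (s:ℕ) := by
      rw [hLs, hgs, if_neg (by decide : ¬¬(0:Fin 3) = 0), add_zero]
    have hlt : (tauP g).symm ⟨(s:ℕ), hs⟩ < (tauP g).symm ⟨(s:ℕ)+1, h1⟩ :=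
      symm_lt_of_letter g (by simpa using hL2.symm) (by simp [Fin.lt_def])
    exact iff_of_false (fun h => absurd hlt (not_lt.mpr h.le)) (by rw [hgs]; decide)
  · have hL2 : LL g ((s:ℕ)+1) = LL g (s:ℕ) + 1 := by
      rw [hLs, hgs, if_pos (by decide : ¬(1:Fin 3) = 0)]
    have ho2 : oneCnt g ((s:ℕ)+1) = oneCnt g (s:ℕ) + 1 := by
      rw [hos, hgs, if_pos rfl]
    have hkey : keyF g ⟨(s:ℕ), hs⟩ < keyF g ⟨(s:ℕ)+1, h1⟩ := by
      unfold keyF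
      simp only [Fin.val_mk]
      rw [hL2, ho2, add_one_mul]
      have h3 : n - LL g (s:ℕ) ≤ n := Nat.sub_le _ _
      omega
    have hlt : (tauP g).symm ⟨(s:ℕ), hs⟩ < (tauP g).symm ⟨(s:ℕ)+1, h1⟩ :=
      symm_lt_of_key g (Or.inl hkey)
    exact iff_of_false (fun h => absurd hlt (not_lt.mpr h.le)) (by rw [hgs]; decide)
  · have hL2 : LL g ((s:ℕ)+1) = LL g (s:ℕ) + 1 := by
      rw [hLs, hgs, if_pos (by decide : ¬(2:Fin 3) = 0)]
    have ho2 : oneCnt g ((s:ℕ)+1) = oneCnt g (s:ℕ) := by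
      rw [hos, hgs, if_neg (by decide : ¬(2:Fin 3) = 1), add_zero]
    have hkey : keyF g ⟨(s:ℕ)+1, h1⟩ < keyF g ⟨(s:ℕ), hs⟩ := by
      unfold keyF
      simp only [Fin.val_mk]
      rw [hL2, ho2]
      omega
    exact iff_of_true (symm_lt_of_key g (Or.inl hkey)) hgs

/-! ### Blocks of size m -/

lemma pos_m {m n : ℕ} (p : Fin (m*n)) : 0 < m := by
  rcases Nat.eq_zero_or_pos m with h | h
  · exfalso; subst h; have h2 := p.2; omega
  · exact h

def slotOf (m : ℕ) {n : ℕ} (p : Fin (m*n)) : Fin n :=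
  ⟨(p:ℕ)/m, Nat.div_lt_of_lt_mul p.2⟩

lemma mul_slot_lt {m n : ℕ} (hm : 0 < m) {t : ℕ} (ht : t < n) : m * t < m * n :=
  Nat.mul_lt_mul_of_le_of_lt (Nat.le_refl m) ht hm

def blockMap (m : ℕ) {n : ℕ} (f : Fin n → Fin n) : Fin (m*n) → Fin (m*n) :=
  fun p => ⟨m * (f (slotOf m p)) + (p:ℕ) % m, by
    have hm := pos_m p
    have h1 : (p:ℕ) % m < m := Nat.mod_lt _ hm
    have h2 : ((f (slotOf m p)) : ℕ) + 1 ≤ n := (f (slotOf m p)).2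
    calc m * (f (slotOf m p)) + (p:ℕ) % m < m * (((f (slotOf m p)) : ℕ) + 1) := by
          rw [Nat.mul_add, Nat.mul_one]; omega
      _ ≤ m * n := Nat.mul_le_mul_left m h2⟩

lemma blockMap_val (m : ℕ) {n : ℕ} (f : Fin n → Fin n) (p : Fin (m*n)) :
    (blockMap m f p : ℕ) = m * (f (slotOf m p)) + (p:ℕ) % m := rfl

lemma blockMap_div (m : ℕ) {n : ℕ} (f : Fin n → Fin n) (p : Fin (m*n)) :
    ((blockMap m f p : ℕ))/m = f (slotOf m p) := by
  have hm := pos_m p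
  rw [blockMap_val, Nat.mul_add_div hm, Nat.div_eq_of_lt (Nat.mod_lt _ hm), add_zero]

lemma blockMap_mod (m : ℕ) {n : ℕ} (f : Fin n → Fin n) (p : Fin (m*n)) :
    ((blockMap m f p : ℕ)) % m = (p:ℕ) % m := by
  rw [blockMap_val, Nat.mul_add_mod, Nat.mod_mod_of_dvd _ dvd_rfl]

lemma slotOf_blockMap (m : ℕ) {n : ℕ} (f : Fin n → Fin n) (p : Fin (m*n)) :
    slotOf m (blockMap m f p) = f (slotOf m p) := by
  apply Fin.ext
  exact blockMap_div m f p

lemma blockMap_comp (m : ℕ) {n : ℕ} (f f' : Fin n → Fin n) (p : Fin (m*n)) :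
    blockMap m f (blockMap m f' p) = blockMap m (fun t => f (f' t)) p := by
  apply Fin.ext
  show m * ↑(f (slotOf m (blockMap m f' p))) + ((blockMap m f' p : Fin (m*n)) : ℕ) % m
      = m * ↑(f (f' (slotOf m p))) + (p:ℕ) % m
  rw [slotOf_blockMap, blockMap_mod]

lemma blockMap_id (m : ℕ) {n : ℕ} (p : Fin (m*n)) : blockMap m (fun t => t) p = p := by
  apply Fin.ext
  rw [blockMap_val]
  exact Nat.div_add_mod (p:ℕ) m

def blockPerm (m : ℕ) {n : ℕ} (τ : Equiv.Perm (Fin n)) : Equiv.Perm (Fin (m*n)) where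
  toFun := blockMap m τ
  invFun := blockMap m τ.symm
  left_inv := fun p => by
    rw [blockMap_comp]
    have : (fun t => τ.symm (τ t)) = fun t : Fin n => t := funext fun t => τ.symm_apply_apply t
    rw [this, blockMap_id]
  right_inv := fun p => by
    rw [blockMap_comp]
    have : (fun t => τ (τ.symm t)) = fun t : Fin n => t := funext fun t => τ.apply_symm_apply t
    rw [this, blockMap_id]

lemma blockPerm_apply (m : ℕ) {n : ℕ} (τ : Equiv.Perm (Fin n)) (p : Fin (m*n)) :
    blockPerm m τ p = blockMap m τ p := rfl

/-! ### Counting lemmas -/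

lemma card_perm {n : ℕ} (τ : Equiv.Perm (Fin n)) (P : Fin n → Prop) [DecidablePred P] :
    (univ.filter fun t => P (τ t)).card = (univ.filter P).card := by
  apply Finset.card_bij' (fun t _ => τ t) (fun t _ => τ.symm t) <;> simp

lemma card_slot (m n : ℕ) (hm : 0 < m) (P : Fin n → Prop) [DecidablePred P] :
    (univ.filter fun p : Fin (m*n) => P (slotOf m p)).card
      = m * (univ.filter fun t => P t).card := by
  rw [show m * (univ.filter fun t : Fin n => P t).card
      = ((univ.filter fun t : Fin n => P t) ×ˢ (univ : Finset (Fin m))).card by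
    rw [Finset.card_product, Finset.card_univ, Fintype.card_fin, Nat.mul_comm]]
  have hbound : ∀ q : Fin n × Fin m, m * (q.1:ℕ) + (q.2:ℕ) < m * n := by
    intro q
    have h2 : (q.1 : ℕ) + 1 ≤ n := q.1.2
    calc m * (q.1 : ℕ) + (q.2 : ℕ) < m * ((q.1:ℕ) + 1) := by
          rw [Nat.mul_add, Nat.mul_one]; exact Nat.add_lt_add_left q.2.2 _
      _ ≤ m * n := Nat.mul_le_mul_left m h2
  have hdiv : ∀ q : Fin n × Fin m, (m * (q.1 : ℕ) + (q.2 : ℕ)) / m = (q.1 : ℕ) := fun q => by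
    rw [Nat.mul_add_div hm, Nat.div_eq_of_lt q.2.2, add_zero]
  have hmod : ∀ q : Fin n × Fin m, (m * (q.1 : ℕ) + (q.2 : ℕ)) % m = (q.2 : ℕ) := fun q => by
    rw [Nat.mul_add_mod, Nat.mod_eq_of_lt q.2.2]
  refine Finset.card_bij' (fun p _ => (slotOf m p, ⟨(p:ℕ) % m, Nat.mod_lt _ hm⟩))
    (fun q _ => ⟨m * (q.1:ℕ) + (q.2:ℕ), hbound q⟩) ?_ ?_ ?_ ?_
  · intro p hp
    simp only [Finset.mem_product, Finset.mem_filter, Finset.mem_univ, true_and] at hp ⊢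
    exact ⟨hp, trivial⟩
  · intro q hq
    simp only [Finset.mem_product, Finset.mem_filter, Finset.mem_univ, true_and] at hq ⊢
    have he : slotOf m (⟨m * (q.1:ℕ) + (q.2:ℕ), hbound q⟩ : Fin (m*n)) = q.1 :=
      Fin.ext (hdiv q)
    rw [he]
    exact hq.1
  · intro p hp
    apply Fin.ext
    show m * ((p:ℕ)/m) + (p:ℕ) % m = (p:ℕ)
    exact Nat.div_add_mod (p:ℕ) m
  · intro q hq
    have h1 : slotOf m (⟨m * (q.1:ℕ) + (q.2:ℕ), hbound q⟩ : Fin (m*n)) = q.1 :=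
      Fin.ext (hdiv q)
    ext
    · exact congrArg Fin.val h1
    · exact hmod q

/-! ### The canonical word and its invariant -/

def wordOf (m : ℕ) {n : ℕ} (g : Fin (n-1) → Fin 3) : Fin (m*n) → ℕ :=
  fun p => LL g (tauP g (slotOf m p))

def sigmaOf (m : ℕ) {n : ℕ} (g : Fin (n-1) → Fin 3) : Equiv.Perm (Fin (m*n)) :=
  blockPerm m (tauP g).symm

lemma sigmaOf_val (m : ℕ) {n : ℕ} (g : Fin (n-1) → Fin 3) (q : Fin (m*n)) :
    (sigmaOf m g q : ℕ) = m * ((tauP g).symm (slotOf m q)) + (q:ℕ) % m := rfl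

lemma wordOf_sigma (m : ℕ) {n : ℕ} (g : Fin (n-1) → Fin 3) (q : Fin (m*n)) :
    wordOf m g (sigmaOf m g q) = LL g (slotOf m q) := by
  show LL g (tauP g (slotOf m (blockMap m (tauP g).symm q))) = _
  rw [slotOf_blockMap, Equiv.apply_symm_apply]

lemma slotOf_val (m : ℕ) {n : ℕ} (q : Fin (m*n)) : ((slotOf m q : Fin n) : ℕ) = (q:ℕ)/m := rfl

lemma sort_wordOf (m : ℕ) {n : ℕ} (g : Fin (n-1) → Fin 3) :
    Tuple.sort (wordOf m g) = sigmaOf m g := by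
  refine (Tuple.eq_sort_iff.mpr ⟨?_, ?_⟩).symm
  · intro q q' h
    show wordOf m g (sigmaOf m g q) ≤ wordOf m g (sigmaOf m g q')
    rw [wordOf_sigma, wordOf_sigma]
    exact LL_mono g (Nat.div_le_div_right h)
  · intro i j hij hval
    have hm : 0 < m := pos_m i
    rw [wordOf_sigma, wordOf_sigma] at hval
    rw [Fin.lt_def, sigmaOf_val, sigmaOf_val]
    have hdm_i := Nat.div_add_mod (i:ℕ) m
    have hdm_j := Nat.div_add_mod (j:ℕ) m
    have hmod_i := Nat.mod_lt (i:ℕ) hm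
    have hmod_j := Nat.mod_lt (j:ℕ) hm
    have hijn : (i:ℕ) < (j:ℕ) := hij
    rcases lt_or_eq_of_le
      (show (i:ℕ)/m ≤ (j:ℕ)/m from Nat.div_le_div_right (Nat.le_of_lt hijn)) with hdiv | hdiv
    · have hslot : (slotOf m i) < (slotOf m j) := hdiv
      have hrho : (tauP g).symm (slotOf m i) < (tauP g).symm (slotOf m j) :=
        symm_lt_of_letter g hval hslot
      have : ((tauP g).symm (slotOf m i) : ℕ) + 1 ≤ ((tauP g).symm (slotOf m j) : ℕ) := hrho
      have h2 : m * (((tauP g).symm (slotOf m i) : ℕ) + 1) ≤ m * ((tauP g).symm (slotOf m j)) :=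
        Nat.mul_le_mul_left m this
      rw [Nat.mul_add, Nat.mul_one] at h2
      omega
    · have hslot : slotOf m i = slotOf m j := Fin.ext hdiv
      rw [hslot]
      have hd : (i:ℕ)/m = (j:ℕ)/m := hdiv
      rw [← hd] at hdm_j
      have : (i:ℕ) % m < (j:ℕ) % m := by omega
      omega

lemma sigma_descent (m : ℕ) {n : ℕ} (g : Fin (n-1) → Fin 3) (i j : Fin (m*n))
    (hij : (j:ℕ) = (i:ℕ)+1) :
    (sigmaOf m g j < sigmaOf m g i) ↔ ∃ s : Fin (n-1), (i:ℕ)+1 = m*((s:ℕ)+1) ∧ g s = 2 := by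
  have hm : 0 < m := pos_m i
  have hdm_i := Nat.div_add_mod (i:ℕ) m
  have hmod_i := Nat.mod_lt (i:ℕ) hm
  by_cases hcase : (i:ℕ) % m = m - 1
  · set t := (i:ℕ)/m with ht
    have hmul : m * (t+1) = m * t + m := by ring
    have hj_eq : (j:ℕ) = m*(t+1) := by omega
    have ht1n : t + 1 < n := by
      have := j.2
      have := Nat.lt_of_mul_lt_mul_left (a := m) (by omega : m * (t+1) < m * n)
      omega
    have htn : t < n := by omega
    have htn1 : t < n - 1 := by omega
    have hj_div : (j:ℕ)/m = t+1 := by rw [hj_eq, Nat.mul_div_cancel_left _ hm]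
    have hj_mod : (j:ℕ) % m = 0 := by rw [hj_eq]; exact Nat.mul_mod_right m _
    have hsj : slotOf m j = ⟨t+1, ht1n⟩ := Fin.ext hj_div
    have hsi : slotOf m i = ⟨t, htn⟩ := Fin.ext rfl
    have hiff := descent_iff g ⟨t, htn1⟩ ht1n htn
    have hABfin : (⟨t+1, ht1n⟩ : Fin n) ≠ ⟨t, htn⟩ :=
      Fin.ne_of_val_ne (show t + 1 ≠ t by omega)
    have hAB : ((tauP g).symm ⟨t+1, ht1n⟩ : Fin n) ≠ (tauP g).symm ⟨t, htn⟩ :=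
      fun h => hABfin ((tauP g).symm.injective h)
    set A := (((tauP g).symm ⟨t+1, ht1n⟩ : Fin n) : ℕ) with hA
    set B := (((tauP g).symm ⟨t, htn⟩ : Fin n) : ℕ) with hB
    have hABne : A ≠ B := fun h => hAB (Fin.ext h)
    have h1 : A < B → m*A + m ≤ m*B := fun h => by
      have h2 : m*(A+1) ≤ m*B := Nat.mul_le_mul_left m h
      rw [Nat.mul_add, Nat.mul_one] at h2; exact h2
    have h2 : B < A → m*B + m ≤ m*A := fun h => by
      have h3 : m*(B+1) ≤ m*A := Nat.mul_le_mul_left m h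
      rw [Nat.mul_add, Nat.mul_one] at h3; exact h3
    have hsigj : (sigmaOf m g j : ℕ) = m*A := by
      rw [sigmaOf_val, hsj, hj_mod, add_zero]
    have hsigi : (sigmaOf m g i : ℕ) = m*B + (m-1) := by
      rw [sigmaOf_val, hsi, hcase]
    have hmain : (sigmaOf m g j < sigmaOf m g i) ↔ A < B := by
      rw [Fin.lt_def, hsigj, hsigi]
      constructor
      · intro hlt
        rcases Nat.lt_trichotomy A B with h | h | h
        · exact h
        · exact absurd h hABne
        · exact absurd hlt (by have := h2 h; omega)
      · intro h
        have := h1 h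
        omega
    have hiff2 : A < B ↔ g ⟨t, htn1⟩ = 2 := hiff
    have hmain2 : (sigmaOf m g j < sigmaOf m g i) ↔ g ⟨t, htn1⟩ = 2 := hmain.trans hiff2
    rw [hmain2]
    constructor
    · intro h
      exact ⟨⟨t, htn1⟩, show (i:ℕ) + 1 = m * (t+1) by omega, h⟩
    · rintro ⟨s, hs1, hs2⟩
      have hs1' : (i:ℕ) + 1 = m * ((s:ℕ)+1) := hs1
      have heq : (s:ℕ) + 1 = t + 1 :=
        Nat.eq_of_mul_eq_mul_left hm (by omega)
      have : s = ⟨t, htn1⟩ := Fin.ext (show (s:ℕ) = t by omega)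
      rwa [this] at hs2
  · apply iff_of_false
    · have hj2 : (j:ℕ) = m*((i:ℕ)/m) + ((i:ℕ)%m + 1) := by omega
      have hd : (j:ℕ)/m = (i:ℕ)/m := by
        rw [hj2, Nat.mul_add_div hm,
          Nat.div_eq_of_lt (show (i:ℕ)%m + 1 < m by omega), add_zero]
      have hjmod : (j:ℕ)%m = (i:ℕ)%m + 1 := by
        rw [hj2, Nat.mul_add_mod, Nat.mod_eq_of_lt (show (i:ℕ)%m + 1 < m by omega)]
      have hslot : slotOf m j = slotOf m i := Fin.ext hd
      rw [Fin.lt_def, sigmaOf_val, sigmaOf_val, hslot, hjmod]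
      omega
    · rintro ⟨s, hs1, hs2⟩
      have hmm : m*((s:ℕ)+1) = m*(s:ℕ) + m := by ring
      have hi2 : (i:ℕ) = m*(s:ℕ) + (m-1) := by omega
      have : (i:ℕ) % m = m - 1 := by
        rw [hi2, Nat.mul_add_mod, Nat.mod_eq_of_lt (by omega)]
      exact hcase this

/-! ### The invariant of the canonical word -/

def PhiEval (m : ℕ) {n : ℕ} (g : Fin (n-1) → Fin 3) : ℕ → ℕ :=
  fun a => m * (univ.filter fun t : Fin n => LL g t = a).card

def PhiRel (m : ℕ) {n : ℕ} (g : Fin (n-1) → Fin 3) : Fin (m*n) → Fin (m*n) → Prop :=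
  fun i j => (j:ℕ) = (i:ℕ)+1 ∧ ∃ s : Fin (n-1), (i:ℕ)+1 = m * ((s:ℕ)+1) ∧ g s = 2

def Phi (m : ℕ) {n : ℕ} (g : Fin (n-1) → Fin 3) :
    (ℕ → ℕ) × (Fin (m*n) → Fin (m*n) → Prop) :=
  (PhiEval m g, PhiRel m g)

lemma eval_wordOf (m n : ℕ) (hm : 0 < m) (g : Fin (n-1) → Fin 3) (a : ℕ) :
    (univ.filter fun p : Fin (m*n) => wordOf m g p = a).card
      = m * (univ.filter fun t : Fin n => LL g t = a).card := by
  rw [show (univ.filter fun p : Fin (m*n) => wordOf m g p = a)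
      = (univ.filter fun p : Fin (m*n) => (fun t => LL g (tauP g t) = a) (slotOf m p)) from rfl]
  rw [card_slot m n hm (fun t => LL g (tauP g t) = a)]
  rw [card_perm (tauP g) (fun t => LL g t = a)]

lemma invariant_wordOf (m n : ℕ) (hm : 0 < m) (g : Fin (n-1) → Fin 3) :
    hypoplacticInvariant (wordOf m g) = Phi m g := by
  unfold hypoplacticInvariant Phi
  refine Prod.ext ?_ ?_
  · funext a
    exact eval_wordOf m n hm g a
  · funext i j
    apply propext
    unfold PhiRel
    rw [sort_wordOf]
    constructor
    · rintro ⟨h1, h2⟩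
      exact ⟨h1, (sigma_descent m g i j h1).mp h2⟩
    · rintro ⟨h1, h2⟩
      exact ⟨h1, (sigma_descent m g i j h1).mpr h2⟩

lemma LL_ivt {n : ℕ} (g : Fin (n-1) → Fin 3) {T k : ℕ} (h1 : 1 ≤ k) (h2 : k ≤ LL g T) :
    ∃ t, t ≤ T ∧ LL g t = k := by
  induction T with
  | zero =>
    refine ⟨0, le_refl _, ?_⟩
    rw [LL_zero] at *
    omega
  | succ T ih =>
    by_cases hk : k ≤ LL g T
    · obtain ⟨t, ht, he⟩ := ih hk
      exact ⟨t, by omega, he⟩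
    · have h3 : cutCnt g (T+1) ≤ cutCnt g T + 1 := cutCnt_succ_le g T
      refine ⟨T+1, le_refl _, ?_⟩
      unfold LL at *
      omega

lemma packed_wordOf (m n : ℕ) (hm : 0 < m) (hn : 0 < n) (g : Fin (n-1) → Fin 3) :
    IsMPackedWord m n (wordOf m g) := by
  refine ⟨?_, ?_, ?_⟩
  · intro i
    exact one_le_LL g _
  · rintro k hk ⟨i, hi⟩
    have h2 : k ≤ LL g ((tauP g (slotOf m i) : Fin n) : ℕ) := by
      unfold wordOf at hi
      omega
    obtain ⟨t, ht, he⟩ := LL_ivt g hk h2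
    have htn : t < n := lt_of_le_of_lt ht (tauP g (slotOf m i)).2
    have hb : m * (((tauP g).symm ⟨t, htn⟩ : Fin n) : ℕ) < m * n :=
      mul_slot_lt hm ((tauP g).symm ⟨t, htn⟩).2
    refine ⟨⟨m * ((tauP g).symm ⟨t, htn⟩), hb⟩, ?_⟩
    unfold wordOf
    have hs : slotOf m ⟨m * ((tauP g).symm ⟨t, htn⟩), hb⟩ = (tauP g).symm ⟨t, htn⟩ := by
      apply Fin.ext
      show (m * ((tauP g).symm ⟨t, htn⟩ : ℕ)) / m = _
      rw [Nat.mul_div_cancel_left _ hm]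
    rw [hs, Equiv.apply_symm_apply]
    exact he
  · intro a
    exact ⟨_, eval_wordOf m n hm g a⟩

/-! ### Injectivity of Phi -/

lemma mem_iff_lt_card {N : ℕ} (S : Finset (Fin N))
    (hS : ∀ ⦃a b : Fin N⦄, a ≤ b → b ∈ S → a ∈ S) (q : Fin N) :
    q ∈ S ↔ (q:ℕ) < S.card := by
  constructor
  · intro h
    have h1 : Finset.Iic q ⊆ S := fun x hx => hS (Finset.mem_Iic.mp hx) h
    have h2 := Finset.card_le_card h1
    rw [Fin.card_Iic] at h2
    omega
  · intro h
    by_contra hq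
    have h1 : S ⊆ Finset.Iio q := by
      intro x hx
      rw [Finset.mem_Iio]
      by_contra hlt
      exact hq (hS (not_lt.mp hlt) hx)
    have h2 := Finset.card_le_card h1
    rw [Fin.card_Iio] at h2
    omega

lemma Phi_inj (m n : ℕ) (hm : 0 < m) (hn : 0 < n) :
    Function.Injective (Phi m (n := n)) := by
  intro g g' h
  have hEval : PhiEval m g = PhiEval m (n := n) g' := congrArg Prod.fst h
  have hRel : PhiRel m g = PhiRel m (n := n) g' := congrArg Prod.snd h
  have hcnt : ∀ a, (univ.filter fun t : Fin n => LL g t = a).card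
      = (univ.filter fun t : Fin n => LL g' t = a).card := by
    intro a
    have := congrFun hEval a
    unfold PhiEval at this
    exact Nat.eq_of_mul_eq_mul_left hm this
  have hCle : ∀ a, (univ.filter fun t : Fin n => LL g t ≤ a).card
      = (univ.filter fun t : Fin n => LL g' t ≤ a).card := by
    intro a
    induction a with
    | zero =>
      have e1 : (univ.filter fun t : Fin n => LL g t ≤ 0) = ∅ := by
        apply Finset.filter_false_of_mem
        intro t _
        have := one_le_LL g (t:ℕ)
        omega
      have e2 : (univ.filter fun t : Fin n => LL g' t ≤ 0) = ∅ := by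
        apply Finset.filter_false_of_mem
        intro t _
        have := one_le_LL g' (t:ℕ)
        omega
      rw [e1, e2]
    | succ a ih =>
      have step : ∀ (g'' : Fin (n-1) → Fin 3),
          (univ.filter fun t : Fin n => LL g'' t ≤ a+1).card
          = (univ.filter fun t : Fin n => LL g'' t ≤ a).card
            + (univ.filter fun t : Fin n => LL g'' t = a+1).card := by
        intro g''
        rw [← Finset.card_union_of_disjoint (by
          rw [Finset.disjoint_left]
          intro t ht1 ht2
          simp only [Finset.mem_filter] at ht1 ht2
          omega), ← Finset.filter_or]
        apply congrArg
        apply Finset.filter_congr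
        intro t _
        omega
      rw [step g, step g', ih, hcnt (a+1)]
  have hLL : ∀ t : Fin n, LL g (t:ℕ) = LL g' (t:ℕ) := by
    intro t
    have key : ∀ a, (LL g (t:ℕ) ≤ a ↔ LL g' (t:ℕ) ≤ a) := by
      intro a
      have k1 := mem_iff_lt_card (univ.filter fun t : Fin n => LL g t ≤ a)
        (by
          intro x y hxy hy
          simp only [Finset.mem_filter, Finset.mem_univ, true_and] at hy ⊢
          exact le_trans (LL_mono g hxy) hy) t
      have k2 := mem_iff_lt_card (univ.filter fun t : Fin n => LL g' t ≤ a)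
        (by
          intro x y hxy hy
          simp only [Finset.mem_filter, Finset.mem_univ, true_and] at hy ⊢
          exact le_trans (LL_mono g' hxy) hy) t
      simp only [Finset.mem_filter, Finset.mem_univ, true_and] at k1 k2
      rw [k1, k2, hCle a]
    have h1 := (key (LL g' (t:ℕ))).mpr (le_refl _)
    have h2 := (key (LL g (t:ℕ))).mp (le_refl _)
    omega
  funext s
  have hsn : (s:ℕ) < n := by have := s.2; omega
  have hs1n : (s:ℕ) + 1 < n := by have := s.2; omega
  have hLs := LL_succ_eq g s
  have hLs' := LL_succ_eq g' s
  have e1 : LL g (s:ℕ) = LL g' (s:ℕ) := hLL ⟨(s:ℕ), hsn⟩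
  have e2 : LL g ((s:ℕ)+1) = LL g' ((s:ℕ)+1) := hLL ⟨(s:ℕ)+1, hs1n⟩
  have hne : (g s ≠ 0) ↔ (g' s ≠ 0) := by
    constructor
    · intro hx
      rw [if_pos hx] at hLs
      by_contra hy
      rw [if_neg (not_not_intro hy)] at hLs'
      omega
    · intro hx
      rw [if_pos hx] at hLs'
      by_contra hy
      rw [if_neg (not_not_intro hy)] at hLs
      omega
  have h2iff : (g s = 2) ↔ (g' s = 2) := by
    have hlt : m * ((s:ℕ)+1) < m * n := mul_slot_lt hm hs1n
    have hlt' : m * ((s:ℕ)+1) - 1 < m * n := by omega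
    have hone : 1 ≤ m * ((s:ℕ)+1) := by
      have : m * 1 ≤ m * ((s:ℕ)+1) := Nat.mul_le_mul_left m (by omega)
      omega
    have hij := congrFun (congrFun hRel ⟨m * ((s:ℕ)+1) - 1, hlt'⟩) ⟨m * ((s:ℕ)+1), hlt⟩
    unfold PhiRel at hij
    have hval : ((⟨m * ((s:ℕ)+1), hlt⟩ : Fin (m*n)) : ℕ)
        = ((⟨m * ((s:ℕ)+1) - 1, hlt'⟩ : Fin (m*n)) : ℕ) + 1 := by
      show m * ((s:ℕ)+1) = m * ((s:ℕ)+1) - 1 + 1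
      omega
    have huniq : ∀ (g'' : Fin (n-1) → Fin 3),
        ((⟨m * ((s:ℕ)+1) - 1, hlt'⟩ : Fin (m*n)) : ℕ) + 1 = m * ((s:ℕ)+1) →
        ((∃ s' : Fin (n-1), ((⟨m * ((s:ℕ)+1) - 1, hlt'⟩ : Fin (m*n)) : ℕ) + 1
            = m * ((s':ℕ)+1) ∧ g'' s' = 2) ↔ g'' s = 2) := by
      intro g'' hv
      constructor
      · rintro ⟨s', hs1, hs2⟩
        have : (s':ℕ) + 1 = (s:ℕ) + 1 := Nat.eq_of_mul_eq_mul_left hm (by omega)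
        have : s' = s := Fin.ext (by omega)
        rwa [this] at hs2
      · intro hg
        exact ⟨s, by omega, hg⟩
    have hv : ((⟨m * ((s:ℕ)+1) - 1, hlt'⟩ : Fin (m*n)) : ℕ) + 1 = m * ((s:ℕ)+1) := by
      show m * ((s:ℕ)+1) - 1 + 1 = m * ((s:ℕ)+1)
      omega
    have hijiff := iff_of_eq hij
    constructor
    · intro hx
      have : (∃ s' : Fin (n-1), ((⟨m * ((s:ℕ)+1) - 1, hlt'⟩ : Fin (m*n)) : ℕ) + 1
          = m * ((s':ℕ)+1) ∧ g' s' = 2) :=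
        (hijiff.mp ⟨hval, (huniq g hv).mpr hx⟩).2
      exact (huniq g' hv).mp this
    · intro hx
      have : (∃ s' : Fin (n-1), ((⟨m * ((s:ℕ)+1) - 1, hlt'⟩ : Fin (m*n)) : ℕ) + 1
          = m * ((s':ℕ)+1) ∧ g s' = 2) :=
        (hijiff.mpr ⟨hval, (huniq g' hv).mpr hx⟩).2
      exact (huniq g hv).mp this
  have : ∀ x y : Fin 3, ((x ≠ 0) ↔ (y ≠ 0)) → ((x = 2) ↔ (y = 2)) → x = y := by decide
  exact this _ _ hne h2iff

/-! ### Arbitrary m-packed words -/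

def cntlt {N : ℕ} (w : Fin N → ℕ) (a : ℕ) : ℕ := (univ.filter fun i => w i < a).card

lemma cntlt_zero {N : ℕ} (w : Fin N → ℕ) : cntlt w 0 = 0 := by
  unfold cntlt
  rw [Finset.filter_false_of_mem (fun i _ => by omega), Finset.card_empty]

lemma cntlt_succ {N : ℕ} (w : Fin N → ℕ) (a : ℕ) :
    cntlt w (a+1) = cntlt w a + (univ.filter fun i => w i = a).card := by
  unfold cntlt
  rw [← Finset.card_union_of_disjoint (by
      rw [Finset.disjoint_left]
      intro i h1 h2
      simp only [Finset.mem_filter, Finset.mem_univ, true_and] at h1 h2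
      omega),
    ← Finset.filter_or]
  apply congrArg
  apply Finset.filter_congr
  intro i _
  constructor
  · intro h; omega
  · intro h; omega

lemma dvd_cntlt {N : ℕ} (w : Fin N → ℕ) (m : ℕ)
    (hdvd : ∀ a, m ∣ (univ.filter fun i => w i = a).card) (a : ℕ) : m ∣ cntlt w a := by
  induction a with
  | zero => rw [cntlt_zero]; exact dvd_zero m
  | succ a ih => rw [cntlt_succ]; exact Nat.dvd_add ih (hdvd a)

lemma v_lt_iff {N : ℕ} (w : Fin N → ℕ) (q : Fin N) (a : ℕ) :
    w (Tuple.sort w q) < a ↔ (q:ℕ) < cntlt w a := by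
  have hmono := Tuple.monotone_sort w
  have hcard : (univ.filter fun q : Fin N => w (Tuple.sort w q) < a).card = cntlt w a :=
    card_perm (Tuple.sort w) (fun i => w i < a)
  have hmem := mem_iff_lt_card (univ.filter fun q : Fin N => w (Tuple.sort w q) < a)
    (by
      intro x y hxy hy
      simp only [Finset.mem_filter, Finset.mem_univ, true_and] at hy ⊢
      exact lt_of_le_of_lt (hmono hxy) hy) q
  simp only [Finset.mem_filter, Finset.mem_univ, true_and] at hmem
  rw [← hcard]
  exact hmem

lemma letters_down {N : ℕ} (w : Fin N → ℕ)
    (hpack : ∀ k : ℕ, 1 ≤ k → (∃ i, w i = k + 1) → ∃ i, w i = k) :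
    ∀ b, (∃ i, w i = b) → ∀ a, 1 ≤ a → a ≤ b → ∃ i, w i = a := by
  intro b
  induction b with
  | zero => intro _ a ha hab; omega
  | succ b ih =>
    intro hb a ha hab
    rcases Nat.lt_or_ge a (b+1) with h | h
    · have hb' : ∃ i, w i = b := hpack b (by omega) hb
      exact ih hb' a ha (by omega)
    · have he : a = b + 1 := by omega
      rw [he]
      exact hb

lemma invariant_eq_Phi (m n : ℕ) (hm : 0 < m) (hn : 0 < n) (w : Fin (m*n) → ℕ)
    (hw : IsMPackedWord m n w) :
    ∃ g : Fin (n-1) → Fin 3, hypoplacticInvariant w = Phi m g := by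
  classical
  obtain ⟨hpos1, hpack, hdvd⟩ := hw
  have hstab : ∀ i j : Fin (m*n), i < j →
      w (Tuple.sort w i) = w (Tuple.sort w j) → Tuple.sort w i < Tuple.sort w j :=
    (Tuple.eq_sort_iff.mp rfl).2
  have hmono : Monotone (w ∘ Tuple.sort w) := Tuple.monotone_sort w
  have hdvdlt : ∀ a, m ∣ cntlt w a := dvd_cntlt w m hdvd
  have hslot : ∀ (p : Fin (m*n)) (hq : m * ((p:ℕ)/m) < m*n),
      w (Tuple.sort w p) = w (Tuple.sort w ⟨m * ((p:ℕ)/m), hq⟩) := by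
    intro p hq
    have hdm := Nat.div_add_mod (p:ℕ) m
    have hmod := Nat.mod_lt (p:ℕ) hm
    have hle : (⟨m * ((p:ℕ)/m), hq⟩ : Fin (m*n)) ≤ p := by
      show m * ((p:ℕ)/m) ≤ (p:ℕ)
      omega
    have h1 : w (Tuple.sort w ⟨m * ((p:ℕ)/m), hq⟩) ≤ w (Tuple.sort w p) := hmono hle
    rcases lt_or_eq_of_le h1 with h2 | h2
    · exfalso
      have h3 : m * ((p:ℕ)/m) < cntlt w (w (Tuple.sort w p)) :=
        (v_lt_iff w ⟨m * ((p:ℕ)/m), hq⟩ (w (Tuple.sort w p))).mp h2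
      have h4 : cntlt w (w (Tuple.sort w p)) ≤ (p:ℕ) := by
        by_contra h5
        have h6 := (v_lt_iff w p (w (Tuple.sort w p))).mpr (by omega)
        omega
      obtain ⟨e, he⟩ := hdvdlt (w (Tuple.sort w p))
      have h6 : (p:ℕ)/m < e := by
        by_contra h7
        push_neg at h7
        have := Nat.mul_le_mul_left m h7
        omega
      have h8 : m * ((p:ℕ)/m + 1) ≤ m * e := Nat.mul_le_mul_left m (by omega)
      rw [Nat.mul_add, Nat.mul_one] at h8
      omega
    · exact h2.symm
  have hnn : ∀ s : Fin (n-1), (s:ℕ)+1 < n := fun s => by have := s.2; omega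
  let g : Fin (n-1) → Fin 3 := fun s =>
    if w (Tuple.sort w ⟨m*((s:ℕ)+1), mul_slot_lt hm (hnn s)⟩)
        = w (Tuple.sort w ⟨m*((s:ℕ)+1) - 1, by have := mul_slot_lt hm (hnn s); omega⟩) then 0
    else if Tuple.sort w ⟨m*((s:ℕ)+1), mul_slot_lt hm (hnn s)⟩
        < Tuple.sort w ⟨m*((s:ℕ)+1) - 1, by have := mul_slot_lt hm (hnn s); omega⟩ then 2 else 1
  have hgval : ∀ (s : Fin (n-1)) (i j : Fin (m*n)),
      (i:ℕ) = m*((s:ℕ)+1) - 1 → (j:ℕ) = m*((s:ℕ)+1) →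
      (g s = 2 ↔ Tuple.sort w j < Tuple.sort w i)
        ∧ (g s = 0 ↔ w (Tuple.sort w j) = w (Tuple.sort w i)) := by
    intro s i j hi hj
    have hone : 0 < m*((s:ℕ)+1) := Nat.mul_pos hm (by omega)
    have hjmk : (⟨m*((s:ℕ)+1), mul_slot_lt hm (hnn s)⟩ : Fin (m*n)) = j :=
      Fin.ext hj.symm
    have himk : (⟨m*((s:ℕ)+1) - 1, by have := mul_slot_lt hm (hnn s); omega⟩ : Fin (m*n)) = i :=
      Fin.ext hi.symm
    have hij : i < j := by rw [Fin.lt_def]; omega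
    simp only [g]
    rw [hjmk, himk]
    split_ifs with h1 h2
    · exact ⟨⟨fun h => absurd h (by decide),
        fun hlt => absurd (hstab i j hij h1.symm) (not_lt.mpr hlt.le)⟩,
        iff_of_true rfl h1⟩
    · exact ⟨iff_of_true rfl h2, iff_of_false (by decide) h1⟩
    · exact ⟨iff_of_false (by decide) h2, iff_of_false (by decide) h1⟩
  have hLLg : ∀ t (ht : t < n), w (Tuple.sort w ⟨m*t, mul_slot_lt hm ht⟩) = LL g t := by
    intro t
    induction t with
    | zero =>
      intro ht
      have hc1 : cntlt w 1 = 0 := by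
        unfold cntlt
        rw [Finset.filter_false_of_mem (fun i _ => by have := hpos1 i; omega),
          Finset.card_empty]
      have h1 := v_lt_iff w ⟨m*0, mul_slot_lt hm ht⟩ 1
      have hex1 : ∃ i, w i = 1 := by
        have hmn : 0 < m*n := Nat.mul_pos hm hn
        have hb := hpos1 ⟨0, hmn⟩
        exact letters_down w hpack (w ⟨0, hmn⟩) ⟨⟨0, hmn⟩, rfl⟩ 1 (le_refl 1) hb
      obtain ⟨i1, hi1⟩ := hex1
      have hc2 : 0 < cntlt w 2 := by
        apply Finset.card_pos.mpr
        exact ⟨i1, by simp only [Finset.mem_filter, Finset.mem_univ, true_and]; omega⟩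
      have h2 := v_lt_iff w ⟨m*0, mul_slot_lt hm ht⟩ 2
      rw [LL_zero]
      have hval : ((⟨m*0, mul_slot_lt hm ht⟩ : Fin (m*n)) : ℕ) = 0 := by
        show m*0 = 0; omega
      rw [hval] at h1 h2
      omega
    | succ t ih =>
      intro ht
      have htn : t < n := by omega
      have ht1 : t < n - 1 := by omega
      have ihv := ih htn
      have hmul : m*(t+1) = m*t + m := by ring
      have hpmlt : m*(t+1) - 1 < m*n := by have := mul_slot_lt hm ht; omega
      obtain ⟨hg2, hg0⟩ := hgval ⟨t, ht1⟩ ⟨m*(t+1)-1, hpmlt⟩ ⟨m*(t+1), mul_slot_lt hm ht⟩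
        rfl rfl
      have hdivPM : (m*(t+1)-1)/m = t := by
        rw [show m*(t+1)-1 = m*t + (m-1) by omega, Nat.mul_add_div hm,
          Nat.div_eq_of_lt (show m-1 < m by omega), add_zero]
      have hqPM : m * ((m*(t+1)-1)/m) < m*n := by rw [hdivPM]; exact mul_slot_lt hm htn
      have hmid : w (Tuple.sort w ⟨m*(t+1)-1, hpmlt⟩)
          = w (Tuple.sort w ⟨m*t, mul_slot_lt hm htn⟩) := by
        have h0 := hslot ⟨m*(t+1)-1, hpmlt⟩ hqPM
        have hPM0 : (⟨m * ((m*(t+1)-1)/m), hqPM⟩ : Fin (m*n))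
            = ⟨m*t, mul_slot_lt hm htn⟩ := Fin.ext (congrArg (fun x => m * x) hdivPM)
        rw [hPM0] at h0
        exact h0
      have hstep_ge : LL g t ≤ w (Tuple.sort w ⟨m*(t+1), mul_slot_lt hm ht⟩) := by
        rw [← ihv]
        apply hmono
        show m*t ≤ m*(t+1)
        omega
      have hstep_le : w (Tuple.sort w ⟨m*(t+1), mul_slot_lt hm ht⟩) ≤ LL g t + 1 := by
        by_contra hcon
        push_neg at hcon
        have hk1 : 1 ≤ LL g t := one_le_LL g t
        have hex : ∃ i, w i = LL g t + 1 :=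
          letters_down w hpack (w (Tuple.sort w ⟨m*(t+1), mul_slot_lt hm ht⟩)) ⟨_, rfl⟩
            (LL g t + 1) (by omega) (by omega)
        obtain ⟨i1, hi1⟩ := hex
        have hcard1 : 0 < (univ.filter fun i => w i = LL g t + 1).card :=
          Finset.card_pos.mpr ⟨i1, by
            simp only [Finset.mem_filter, Finset.mem_univ, true_and]; exact hi1⟩
        have hcardm : m ≤ (univ.filter fun i => w i = LL g t + 1).card :=
          Nat.le_of_dvd hcard1 (hdvd (LL g t + 1))
        have e1 : m*t < cntlt w (LL g t + 1) :=
          (v_lt_iff w ⟨m*t, mul_slot_lt hm htn⟩ (LL g t + 1)).mp (by omega)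
        obtain ⟨e, he⟩ := hdvdlt (LL g t + 1)
        have h6 : t < e := by
          by_contra h7
          push_neg at h7
          have := Nat.mul_le_mul_left m h7
          omega
        have e2 : m*(t+1) ≤ cntlt w (LL g t + 1) := by
          have := Nat.mul_le_mul_left m (show t+1 ≤ e by omega)
          omega
        have e3 : cntlt w (LL g t + 2)
            = cntlt w (LL g t + 1) + (univ.filter fun i => w i = LL g t + 1).card :=
          cntlt_succ w (LL g t + 1)
        have e4 : cntlt w (LL g t + 2) ≤ m*(t+1) := by
          by_contra h7
          push_neg at h7
          have h8 : w (Tuple.sort w ⟨m*(t+1), mul_slot_lt hm ht⟩) < LL g t + 2 :=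
            (v_lt_iff w ⟨m*(t+1), mul_slot_lt hm ht⟩ (LL g t + 2)).mpr
              (show m*(t+1) < cntlt w (LL g t + 2) by omega)
          omega
        omega
      have hLs := LL_succ_eq g ⟨t, ht1⟩
      simp only [Fin.val_mk] at hLs
      by_cases hcase : w (Tuple.sort w ⟨m*(t+1), mul_slot_lt hm ht⟩)
          = w (Tuple.sort w ⟨m*(t+1)-1, hpmlt⟩)
      · have hgz : g ⟨t, ht1⟩ = 0 := hg0.mpr hcase
        rw [hgz, if_neg (by decide)] at hLs
        rw [hLs, add_zero, hcase, hmid, ihv]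
      · have hgnz : g ⟨t, ht1⟩ ≠ 0 := fun h => hcase (hg0.mp h)
        rw [if_pos hgnz] at hLs
        rw [hLs]
        have hne : w (Tuple.sort w ⟨m*(t+1), mul_slot_lt hm ht⟩) ≠ LL g t := by
          intro h
          exact hcase (by rw [h, hmid, ihv])
        omega
  have heval : ∀ a, (univ.filter fun i => w i = a).card = PhiEval m g a := by
    intro a
    unfold PhiEval
    rw [← card_perm (Tuple.sort w) (fun i => w i = a),
      ← card_slot m n hm (fun t : Fin n => LL g (t:ℕ) = a)]
    apply congrArg
    apply Finset.filter_congr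
    intro q _
    have hqlt : (q:ℕ)/m < n := Nat.div_lt_of_lt_mul q.2
    rw [hslot q (mul_slot_lt hm hqlt), hLLg ((q:ℕ)/m) hqlt]
    exact Iff.rfl
  have hrel : ∀ i j : Fin (m*n),
      ((j:ℕ) = (i:ℕ)+1 ∧ Tuple.sort w j < Tuple.sort w i) ↔ PhiRel m g i j := by
    intro i j
    unfold PhiRel
    apply and_congr_right
    intro hij
    have hdm_i := Nat.div_add_mod (i:ℕ) m
    have hmod_i := Nat.mod_lt (i:ℕ) hm
    by_cases hcase : (i:ℕ) % m = m - 1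
    · have hmul : m*((i:ℕ)/m+1) = m*((i:ℕ)/m) + m := by ring
      have hj_eq : (j:ℕ) = m*((i:ℕ)/m+1) := by omega
      have ht1n : (i:ℕ)/m + 1 < n := by
        have h2 := j.2
        have := Nat.lt_of_mul_lt_mul_left (a := m)
          (show m*((i:ℕ)/m+1) < m*n by omega)
        omega
      have htn1 : (i:ℕ)/m < n-1 := by omega
      obtain ⟨hg2, hg0⟩ := hgval ⟨(i:ℕ)/m, htn1⟩ i j
        (show (i:ℕ) = m*((i:ℕ)/m+1) - 1 by omega)
        (show (j:ℕ) = m*((i:ℕ)/m+1) by omega)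
      constructor
      · intro hlt
        exact ⟨⟨(i:ℕ)/m, htn1⟩, show (i:ℕ)+1 = m*((i:ℕ)/m+1) by omega, hg2.mpr hlt⟩
      · rintro ⟨s', hs1, hs2⟩
        have hs1' : (i:ℕ)+1 = m*((s':ℕ)+1) := hs1
        have heqv : (s':ℕ) + 1 = (i:ℕ)/m + 1 :=
          Nat.eq_of_mul_eq_mul_left hm (by omega)
        have hseq : s' = ⟨(i:ℕ)/m, htn1⟩ := Fin.ext (show (s':ℕ) = (i:ℕ)/m by omega)
        rw [hseq] at hs2
        exact hg2.mp hs2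
    · apply iff_of_false
      · have hj2 : (j:ℕ) = m*((i:ℕ)/m) + ((i:ℕ)%m + 1) := by omega
        have hdivj : (j:ℕ)/m = (i:ℕ)/m := by
          rw [hj2, Nat.mul_add_div hm,
            Nat.div_eq_of_lt (show (i:ℕ)%m+1 < m by omega), add_zero]
        have hqi : m*((i:ℕ)/m) < m*n := mul_slot_lt hm (Nat.div_lt_of_lt_mul i.2)
        have hqj : m*((j:ℕ)/m) < m*n := mul_slot_lt hm (Nat.div_lt_of_lt_mul j.2)
        have hvi := hslot i hqi
        have hvj := hslot j hqj
        have hmk : (⟨m*((j:ℕ)/m), hqj⟩ : Fin (m*n)) = ⟨m*((i:ℕ)/m), hqi⟩ :=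
          Fin.ext (congrArg (fun x => m * x) hdivj)
        rw [hmk] at hvj
        have hveq : w (Tuple.sort w i) = w (Tuple.sort w j) := by rw [hvi, hvj]
        have hlt : i < j := by rw [Fin.lt_def]; omega
        exact fun h => absurd (hstab i j hlt hveq) (not_lt.mpr h.le)
      · rintro ⟨s', hs1, hs2⟩
        have h0 : ((i:ℕ)+1) % m = 0 := by rw [hs1]; exact Nat.mul_mod_right m _
        rw [show (i:ℕ)+1 = m*((i:ℕ)/m) + ((i:ℕ)%m+1) by omega, Nat.mul_add_mod,
          Nat.mod_eq_of_lt (show (i:ℕ)%m+1 < m by omega)] at h0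
        omega
  refine ⟨g, ?_⟩
  unfold hypoplacticInvariant Phi
  refine Prod.ext ?_ ?_
  · funext a
    exact heval a
  · funext i j
    exact propext (hrel i j)

end HypoCount

/-- The number of hypoplactic classes of `m`-packed words of degree
`n` (length `mn`) is `3^(n−1)` for `n ≥ 1`. -/
theorem card_hypoplactic_classes_mPackedWords (m n : ℕ) (hm : 1 ≤ m) (hn : 1 ≤ n) :
    Nat.card
      (Quotient (Setoid.comap
        (Subtype.val : {w : Fin (m * n) → ℕ // IsMPackedWord m n w} → (Fin (m * n) → ℕ))
        (Setoid.ker hypoplacticInvariant))) = 3 ^ (n - 1) := by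
  classical
  have hset : Setoid.comap
      (Subtype.val : {w : Fin (m * n) → ℕ // IsMPackedWord m n w} → (Fin (m * n) → ℕ))
      (Setoid.ker hypoplacticInvariant)
      = Setoid.ker (fun x : {w : Fin (m * n) → ℕ // IsMPackedWord m n w} =>
          hypoplacticInvariant x.val) :=
    Setoid.ext fun x y => Iff.rfl
  rw [hset]
  rw [Nat.card_congr (Setoid.quotientKerEquivRange
    (fun x : {w : Fin (m * n) → ℕ // IsMPackedWord m n w} => hypoplacticInvariant x.val))]
  have hr : Set.range (fun x : {w : Fin (m * n) → ℕ // IsMPackedWord m n w} =>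
      hypoplacticInvariant x.val) = Set.range (HypoCount.Phi m (n := n)) := by
    ext y
    simp only [Set.mem_range]
    constructor
    · rintro ⟨⟨w, hw⟩, rfl⟩
      obtain ⟨g, hg⟩ := HypoCount.invariant_eq_Phi m n hm hn w hw
      exact ⟨g, hg.symm⟩
    · rintro ⟨g, rfl⟩
      exact ⟨⟨HypoCount.wordOf m g, HypoCount.packed_wordOf m n hm hn g⟩,
        HypoCount.invariant_wordOf m n hm g⟩
  rw [hr, Nat.card_range_of_injective (HypoCount.Phi_inj m n hm hn), Nat.card_fun]
  simp
end
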